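/- arXiv:2112.05028 — 5 statements merged into one kernel-verified Lean document; each statement's English description precedes it below -/
import Mathlib

section
/- Let p ∈ ℝ³ and u, v, w ∈ ℝ³ be such that {v,u} and {v,w} are each linearly independent and the closed triangles T_τ = {p + y₁ v + y₂ u : 0 ≤ y₂ ≤ y₁ ≤ 1} and T_σ = {p + x₁ v + x₂ w : 0 ≤ x₂ ≤ x₁ ≤ 1} intersect exactly in their common edge, i.e. T_τ ∩ T_σ = {p + t v : 0 ≤ t ≤ 1}. Then ∫_{π×π} 1/|(x₁−y₁)v + x₂ w − y₂ u| d(x,y) = (1/6) ∫_{(0,1)²} [ 1/|η₃(u+v) + η₄ w − u| + η₃/|η₃η₄(u+v) − η₃ u + w| + η₃/|η₃η₄(w+v) − η₃ w + u| + η₃/|η₃η₄ u + η₃(w+v) − w| + η₃/|η₃η₄(w+v) + η₃ u − w| ] d(η₃,η₄), and both sides are finite. -/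
open MeasureTheory Set

set_option maxHeartbeats 1600000


/-- The open reference triangle `π = {(x₁,x₂) : 0 < x₂ < x₁ < 1} ⊂ ℝ²`. -/
def refTri : Set (ℝ × ℝ) := {p | 0 < p.2 ∧ p.2 < p.1 ∧ p.1 < 1}

/-- The closed triangle `{p + t₁ a + t₂ b : 0 ≤ t₂ ≤ t₁ ≤ 1} ⊂ ℝ³`. -/
def closedTri (p a b : EuclideanSpace ℝ (Fin 3)) : Set (EuclideanSpace ℝ (Fin 3)) :=
  {z | ∃ t₁ t₂ : ℝ, 0 ≤ t₂ ∧ t₂ ≤ t₁ ∧ t₁ ≤ 1 ∧ z = p + t₁ • a + t₂ • b}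

section geom
variable {p u v w : EuclideanSpace ℝ (Fin 3)}

lemma slp_dichotomy (hvu : LinearIndependent ℝ ![v, u]) (hvw : LinearIndependent ℝ ![v, w])
    (hinter : closedTri p v u ∩ closedTri p v w
      = {z | ∃ t : ℝ, 0 ≤ t ∧ t ≤ 1 ∧ z = p + t • v}) :
    (∀ a b c : ℝ, a • v + b • u + c • w = 0 → a = 0 ∧ b = 0 ∧ c = 0) ∨
      (∃ α β : ℝ, α < 0 ∧ w = α • u + β • v) := by
  by_cases hdep : ∃ α β : ℝ, w = α • u + β • v
  · right
    obtain ⟨α, β, hw⟩ := hdep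
    refine ⟨α, β, ?_, hw⟩
    rcases lt_trichotomy α 0 with h | h | h
    · exact h
    · exfalso
      subst h
      have h0 : β • v + (-1 : ℝ) • w = 0 := by rw [hw]; module
      have := (LinearIndependent.pair_iff.1 hvw β (-1) h0).2
      norm_num at this
    · exfalso
      set t := min (1/2) (min (1/(4*α)) (1/(4*(|β|+1)))) with ht
      have hβ1 : (0:ℝ) < |β| + 1 := by positivity
      have ht0 : 0 < t := by
        apply lt_min (by norm_num)
        exact lt_min (by positivity) (by positivity)
      have ht12 : t ≤ 1/2 := min_le_left _ _
      have htα : t * α ≤ 1/4 := by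
        have h1 : t ≤ 1/(4*α) := le_trans (min_le_right _ _) (min_le_left _ _)
        have : (1/(4*α)) * α = 1/4 := by field_simp
        nlinarith
      have htβ : t * |β| ≤ 1/4 := by
        have h1 : t ≤ 1/(4*(|β|+1)) := le_trans (min_le_right _ _) (min_le_right _ _)
        have h2 : (1/(4*(|β|+1))) * (|β|+1) = 1/4 := by field_simp
        nlinarith [abs_nonneg β]
      have hβlow : -(1/4) ≤ t*β := by
        have := neg_abs_le (t*β)
        have habs : |t*β| = t*|β| := by rw [abs_mul, abs_of_pos ht0]
        nlinarith [neg_abs_le (t*β)]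
      have hβhigh : t*β ≤ 1/4 := by
        have habs : |t*β| = t*|β| := by rw [abs_mul, abs_of_pos ht0]
        nlinarith [le_abs_self (t*β)]
      have hq : (p + (1/2 + t*β) • v + (t*α) • u) ∈ closedTri p v u ∩ closedTri p v w := by
        constructor
        · exact ⟨1/2 + t*β, t*α, by positivity, by nlinarith, by linarith, rfl⟩
        · exact ⟨1/2, t, le_of_lt ht0, ht12, by norm_num, by rw [hw]; module⟩
      rw [hinter] at hq
      obtain ⟨c, _, _, hc⟩ := hq
      have h0 : (1/2 + t*β - c) • v + (t*α) • u
          = (p + (1/2 + t*β) • v + (t*α) • u) - (p + c • v) := by module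
      rw [hc, sub_self] at h0
      have := (LinearIndependent.pair_iff.1 hvu _ _ h0).2
      nlinarith [mul_pos ht0 h]
  · left
    intro a b c h
    by_cases hc : c = 0
    · subst hc
      have h' : a • v + b • u = 0 := by
        have : a • v + b • u = a • v + b • u + (0:ℝ) • w := by module
        rw [this, h]
      obtain ⟨ha, hb⟩ := LinearIndependent.pair_iff.1 hvu a b h'
      exact ⟨ha, hb, rfl⟩
    · exfalso
      apply hdep
      refine ⟨-(b/c), -(a/c), ?_⟩
      have h1 : c • w = -(a • v + b • u) := eq_neg_of_add_eq_zero_right h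
      have h2 : w = c⁻¹ • (c • w) := (inv_smul_smul₀ hc w).symm
      rw [h1] at h2
      rw [h2]
      match_scalars <;> (field_simp; try ring)
end geom


section dens
variable {u v w : EuclideanSpace ℝ (Fin 3)}

variable (hvu : LinearIndependent ℝ ![v, u])
variable (hd : (∀ a b c : ℝ, a • v + b • u + c • w = 0 → a = 0 ∧ b = 0 ∧ c = 0) ∨
      (∃ α β : ℝ, α < 0 ∧ w = α • u + β • v))

include hvu hd

lemma den1 {a b : ℝ} (ha0 : 0 ≤ a) (ha1 : a ≤ 1) (hb0 : 0 ≤ b) (hb1 : b ≤ 1) :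
    a • (u + v) + b • w - u ≠ 0 := by
  intro h
  rcases hd with hind | ⟨α, β, hα, hw⟩
  · have h' : a • v + (a - 1) • u + b • w = 0 := by rw [← h]; module
    obtain ⟨h1, h2, h3⟩ := hind a (a-1) b h'
    linarith
  · have h0 : (a + b*β) • v + (a - 1 + b*α) • u = 0 := by
      have e : (a + b*β) • v + (a - 1 + b*α) • u = a • (u + v) + b • (α • u + β • v) - u := by
        module
      rw [← hw, h] at e; exact e
    obtain ⟨e1, e2⟩ := LinearIndependent.pair_iff.1 hvu _ _ h0
    have hba : b*α ≤ 0 := mul_nonpos_of_nonneg_of_nonpos hb0 hα.le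
    have ha' : a = 1 := by linarith
    have hbα0 : b*α = 0 := by linarith
    have hb' : b = 0 := by
      rcases mul_eq_zero.1 hbα0 with h' | h'
      · exact h'
      · exact absurd h' hα.ne
    rw [ha', hb'] at e1; norm_num at e1

lemma den2 {a b : ℝ} (ha0 : 0 ≤ a) (ha1 : a ≤ 1) (hb0 : 0 ≤ b) (hb1 : b ≤ 1) :
    (a * b) • (u + v) - a • u + w ≠ 0 := by
  intro h
  rcases hd with hind | ⟨α, β, hα, hw⟩
  · have h' : (a*b) • v + (a*b - a) • u + (1:ℝ) • w = 0 := by rw [← h]; module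
    obtain ⟨h1, h2, h3⟩ := hind _ _ _ h'
    norm_num at h3
  · have h0 : (a*b + β) • v + (a*b - a + α) • u = 0 := by
      have e : (a*b + β) • v + (a*b - a + α) • u
          = (a*b) • (u + v) - a • u + (α • u + β • v) := by module
      rw [← hw, h] at e; exact e
    obtain ⟨e1, e2⟩ := LinearIndependent.pair_iff.1 hvu _ _ h0
    nlinarith [mul_nonneg ha0 (sub_nonneg.2 hb1)]

lemma den3 {a b : ℝ} (ha0 : 0 ≤ a) (ha1 : a ≤ 1) (hb0 : 0 ≤ b) (hb1 : b ≤ 1) :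
    (a * b) • (w + v) - a • w + u ≠ 0 := by
  intro h
  rcases hd with hind | ⟨α, β, hα, hw⟩
  · have h' : (a*b) • v + (1:ℝ) • u + (a*b - a) • w = 0 := by rw [← h]; module
    obtain ⟨h1, h2, h3⟩ := hind _ _ _ h'
    norm_num at h2
  · have h0 : (a*b + (a*b - a)*β) • v + (1 + (a*b - a)*α) • u = 0 := by
      have e : (a*b + (a*b - a)*β) • v + (1 + (a*b - a)*α) • u
          = (a*b) • ((α • u + β • v) + v) - a • (α • u + β • v) + u := by module
      rw [← hw, h] at e; exact e
    obtain ⟨e1, e2⟩ := LinearIndependent.pair_iff.1 hvu _ _ h0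
    have key : (a*b - a)*α ≥ 0 := by
      have h1 : a*b - a ≤ 0 := by nlinarith
      nlinarith
    linarith

lemma den4 {a b : ℝ} (ha0 : 0 ≤ a) (ha1 : a ≤ 1) (hb0 : 0 ≤ b) (hb1 : b ≤ 1) :
    (a * b) • u + a • (w + v) - w ≠ 0 := by
  intro h
  rcases hd with hind | ⟨α, β, hα, hw⟩
  · have h' : a • v + (a*b) • u + (a - 1) • w = 0 := by rw [← h]; module
    obtain ⟨h1, h2, h3⟩ := hind _ _ _ h'
    linarith
  · have h0 : (a + (a-1)*β) • v + (a*b + (a-1)*α) • u = 0 := by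
      have e : (a + (a-1)*β) • v + (a*b + (a-1)*α) • u
          = (a*b) • u + a • ((α • u + β • v) + v) - (α • u + β • v) := by module
      rw [← hw, h] at e; exact e
    obtain ⟨e1, e2⟩ := LinearIndependent.pair_iff.1 hvu _ _ h0
    have hab : 0 ≤ a*b := mul_nonneg ha0 hb0
    have h1 : (a-1)*α ≥ 0 := by nlinarith
    have ha' : a = 1 := by nlinarith
    rw [ha'] at e1; norm_num at e1

lemma den5 {a b : ℝ} (ha0 : 0 ≤ a) (ha1 : a ≤ 1) (hb0 : 0 ≤ b) (hb1 : b ≤ 1) :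
    (a * b) • (w + v) + a • u - w ≠ 0 := by
  intro h
  rcases hd with hind | ⟨α, β, hα, hw⟩
  · have h' : (a*b) • v + a • u + (a*b - 1) • w = 0 := by rw [← h]; module
    obtain ⟨h1, h2, h3⟩ := hind _ _ _ h'
    nlinarith
  · have h0 : (a*b + (a*b-1)*β) • v + (a + (a*b-1)*α) • u = 0 := by
      have e : (a*b + (a*b-1)*β) • v + (a + (a*b-1)*α) • u
          = (a*b) • ((α • u + β • v) + v) + a • u - (α • u + β • v) := by module
      rw [← hw, h] at e; exact e
    obtain ⟨e1, e2⟩ := LinearIndependent.pair_iff.1 hvu _ _ h0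
    have hab1 : a*b ≤ 1 := by nlinarith
    have h1 : 0 ≤ (a*b-1)*α := by
      nlinarith [mul_nonneg (sub_nonneg.2 hab1) (neg_nonneg.2 hα.le)]
    have ha' : a = 0 := by linarith
    have h2 : (a*b-1)*α = 0 := by linarith
    rw [ha'] at h2
    norm_num at h2
    exact hα.ne h2

end dens


noncomputable def core (u v w : EuclideanSpace ℝ (Fin 3)) (η : ℝ × ℝ) : ℝ :=
  1 / ‖η.1 • (u + v) + η.2 • w - u‖
    + η.1 / ‖(η.1 * η.2) • (u + v) - η.1 • u + w‖
    + η.1 / ‖(η.1 * η.2) • (w + v) - η.1 • w + u‖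
    + η.1 / ‖(η.1 * η.2) • u + η.1 • (w + v) - w‖
    + η.1 / ‖(η.1 * η.2) • (w + v) + η.1 • u - w‖

lemma core_measurable (u v w : EuclideanSpace ℝ (Fin 3)) : Measurable (core u v w) := by
  unfold core
  apply Measurable.add
  apply Measurable.add
  apply Measurable.add
  apply Measurable.add
  all_goals
    apply Measurable.div <;> fun_prop

lemma frac_le {x t e : ℝ} (hx0 : 0 ≤ x) (hx1 : x ≤ 1) (he : 0 < e) (ht : e ≤ t) :
    x / t ≤ 1 / e := by
  rw [div_le_div_iff₀ (lt_of_lt_of_le he ht) he]; nlinarith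

lemma core_nonneg (u v w : EuclideanSpace ℝ (Fin 3)) {η : ℝ × ℝ} (h : 0 ≤ η.1) :
    0 ≤ core u v w η := by
  unfold core; positivity

section bdd
variable {u v w : EuclideanSpace ℝ (Fin 3)}
variable (hvu : LinearIndependent ℝ ![v, u])
variable (hd : (∀ a b c : ℝ, a • v + b • u + c • w = 0 → a = 0 ∧ b = 0 ∧ c = 0) ∨
      (∃ α β : ℝ, α < 0 ∧ w = α • u + β • v))

variable (den1' : ∀ {a b : ℝ}, 0 ≤ a → a ≤ 1 → 0 ≤ b → b ≤ 1 → a • (u + v) + b • w - u ≠ 0)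
variable (den2' : ∀ {a b : ℝ}, 0 ≤ a → a ≤ 1 → 0 ≤ b → b ≤ 1 → (a * b) • (u + v) - a • u + w ≠ 0)
variable (den3' : ∀ {a b : ℝ}, 0 ≤ a → a ≤ 1 → 0 ≤ b → b ≤ 1 → (a * b) • (w + v) - a • w + u ≠ 0)
variable (den4' : ∀ {a b : ℝ}, 0 ≤ a → a ≤ 1 → 0 ≤ b → b ≤ 1 → (a * b) • u + a • (w + v) - w ≠ 0)
variable (den5' : ∀ {a b : ℝ}, 0 ≤ a → a ≤ 1 → 0 ≤ b → b ≤ 1 → (a * b) • (w + v) + a • u - w ≠ 0)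

lemma core_bdd (den1' : ∀ {a b : ℝ}, 0 ≤ a → a ≤ 1 → 0 ≤ b → b ≤ 1 → a • (u + v) + b • w - u ≠ 0)
    (den2' : ∀ {a b : ℝ}, 0 ≤ a → a ≤ 1 → 0 ≤ b → b ≤ 1 → (a * b) • (u + v) - a • u + w ≠ 0)
    (den3' : ∀ {a b : ℝ}, 0 ≤ a → a ≤ 1 → 0 ≤ b → b ≤ 1 → (a * b) • (w + v) - a • w + u ≠ 0)
    (den4' : ∀ {a b : ℝ}, 0 ≤ a → a ≤ 1 → 0 ≤ b → b ≤ 1 → (a * b) • u + a • (w + v) - w ≠ 0)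
    (den5' : ∀ {a b : ℝ}, 0 ≤ a → a ≤ 1 → 0 ≤ b → b ≤ 1 → (a * b) • (w + v) + a • u - w ≠ 0) :
    ∃ C : ℝ, 0 ≤ C ∧ ∀ η : ℝ × ℝ, η ∈ (Icc (0:ℝ) 1) ×ˢ (Icc (0:ℝ) 1) → core u v w η ≤ C := by
  have hK : IsCompact ((Icc (0:ℝ) 1) ×ˢ (Icc (0:ℝ) 1)) := isCompact_Icc.prod isCompact_Icc
  have hne : ((Icc (0:ℝ) 1) ×ˢ (Icc (0:ℝ) 1)).Nonempty := ⟨(0,0), by norm_num⟩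
  have key : ∀ F : ℝ × ℝ → EuclideanSpace ℝ (Fin 3), Continuous F →
      (∀ η ∈ (Icc (0:ℝ) 1) ×ˢ (Icc (0:ℝ) 1), F η ≠ 0) →
      ∃ e : ℝ, 0 < e ∧ ∀ η ∈ (Icc (0:ℝ) 1) ×ˢ (Icc (0:ℝ) 1), e ≤ ‖F η‖ := by
    intro F hF hFne
    obtain ⟨x₀, hx₀, hmin⟩ := hK.exists_isMinOn hne (hF.norm.continuousOn)
    exact ⟨‖F x₀‖, norm_pos_iff.2 (hFne x₀ hx₀), fun η hη => hmin hη⟩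
  obtain ⟨e1, he1, hb1⟩ := key (fun η => η.1 • (u + v) + η.2 • w - u) (by fun_prop)
    (fun η hη => den1' hη.1.1 hη.1.2 hη.2.1 hη.2.2)
  obtain ⟨e2, he2, hb2⟩ := key (fun η => (η.1 * η.2) • (u + v) - η.1 • u + w) (by fun_prop)
    (fun η hη => den2' hη.1.1 hη.1.2 hη.2.1 hη.2.2)
  obtain ⟨e3, he3, hb3⟩ := key (fun η => (η.1 * η.2) • (w + v) - η.1 • w + u) (by fun_prop)
    (fun η hη => den3' hη.1.1 hη.1.2 hη.2.1 hη.2.2)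
  obtain ⟨e4, he4, hb4⟩ := key (fun η => (η.1 * η.2) • u + η.1 • (w + v) - w) (by fun_prop)
    (fun η hη => den4' hη.1.1 hη.1.2 hη.2.1 hη.2.2)
  obtain ⟨e5, he5, hb5⟩ := key (fun η => (η.1 * η.2) • (w + v) + η.1 • u - w) (by fun_prop)
    (fun η hη => den5' hη.1.1 hη.1.2 hη.2.1 hη.2.2)
  refine ⟨1/e1 + 1/e2 + 1/e3 + 1/e4 + 1/e5, by positivity, ?_⟩
  intro η hη
  have ha0 := hη.1.1
  have ha1 := hη.1.2
  have t1 : 1 / ‖η.1 • (u + v) + η.2 • w - u‖ ≤ 1/e1 :=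
    frac_le zero_le_one le_rfl he1 (hb1 η hη)
  have t2 : η.1 / ‖(η.1 * η.2) • (u + v) - η.1 • u + w‖ ≤ 1/e2 :=
    frac_le ha0 ha1 he2 (hb2 η hη)
  have t3 : η.1 / ‖(η.1 * η.2) • (w + v) - η.1 • w + u‖ ≤ 1/e3 :=
    frac_le ha0 ha1 he3 (hb3 η hη)
  have t4 : η.1 / ‖(η.1 * η.2) • u + η.1 • (w + v) - w‖ ≤ 1/e4 :=
    frac_le ha0 ha1 he4 (hb4 η hη)
  have t5 : η.1 / ‖(η.1 * η.2) • (w + v) + η.1 • u - w‖ ≤ 1/e5 :=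
    frac_le ha0 ha1 he5 (hb5 η hη)
  unfold core
  linarith

end bdd


noncomputable section

abbrev E4 := (ℝ × ℝ) × (ℝ × ℝ)

instance : Measure.IsAddHaarMeasure (volume : Measure E4) :=
  Measure.prod.instIsAddHaarMeasure _ _

def bE : Module.Basis (Fin 2 ⊕ Fin 2) ℝ E4 :=
  (Module.Basis.finTwoProd ℝ).prod (Module.Basis.finTwoProd ℝ)

def pi1 : E4 →L[ℝ] ℝ := (ContinuousLinearMap.fst ℝ ℝ ℝ).comp (ContinuousLinearMap.fst ℝ (ℝ×ℝ) (ℝ×ℝ))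
def pi2 : E4 →L[ℝ] ℝ := (ContinuousLinearMap.snd ℝ ℝ ℝ).comp (ContinuousLinearMap.fst ℝ (ℝ×ℝ) (ℝ×ℝ))
def pi3 : E4 →L[ℝ] ℝ := (ContinuousLinearMap.fst ℝ ℝ ℝ).comp (ContinuousLinearMap.snd ℝ (ℝ×ℝ) (ℝ×ℝ))
def pi4 : E4 →L[ℝ] ℝ := (ContinuousLinearMap.snd ℝ ℝ ℝ).comp (ContinuousLinearMap.snd ℝ (ℝ×ℝ) (ℝ×ℝ))

def row (a b c d : ℝ) : E4 →L[ℝ] ℝ := a • pi1 + b • pi2 + c • pi3 + d • pi4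

@[simp] lemma row_apply (a b c d : ℝ) (x : E4) :
    row a b c d x = a * x.1.1 + b * x.1.2 + c * x.2.1 + d * x.2.2 := by
  simp [row, pi1, pi2, pi3, pi4]

def mk4 (r1 r2 r3 r4 : ℝ × ℝ × ℝ × ℝ) : E4 →L[ℝ] E4 :=
  ((row r1.1 r1.2.1 r1.2.2.1 r1.2.2.2).prod (row r2.1 r2.2.1 r2.2.2.1 r2.2.2.2)).prod
  ((row r3.1 r3.2.1 r3.2.2.1 r3.2.2.2).prod (row r4.1 r4.2.1 r4.2.2.1 r4.2.2.2))

@[simp] lemma mk4_apply (r1 r2 r3 r4 : ℝ × ℝ × ℝ × ℝ) (x : E4) :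
    mk4 r1 r2 r3 r4 x = ((row r1.1 r1.2.1 r1.2.2.1 r1.2.2.2 x, row r2.1 r2.2.1 r2.2.2.1 r2.2.2.2 x),
      (row r3.1 r3.2.1 r3.2.2.1 r3.2.2.2 x, row r4.1 r4.2.1 r4.2.2.1 r4.2.2.2 x)) := rfl

@[simp] lemma fsfe0 : (finSumFinEquiv.symm (0 : Fin (2+2)) : Fin 2 ⊕ Fin 2) = Sum.inl (0: Fin 2) := by decide
@[simp] lemma fsfe1 : (finSumFinEquiv.symm (1 : Fin (2+2)) : Fin 2 ⊕ Fin 2) = Sum.inl (1: Fin 2) := by decide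
@[simp] lemma fsfe2 : (finSumFinEquiv.symm (2 : Fin (2+2)) : Fin 2 ⊕ Fin 2) = Sum.inr (0: Fin 2) := by decide
@[simp] lemma fsfe3 : (finSumFinEquiv.symm (3 : Fin (2+2)) : Fin 2 ⊕ Fin 2) = Sum.inr (1: Fin 2) := by decide
@[simp] lemma castSucc2 : (Fin.castSucc (2 : Fin 3)) = (2 : Fin 4) := rfl

lemma det_mk4 (r1 r2 r3 r4 : ℝ × ℝ × ℝ × ℝ) :
    (mk4 r1 r2 r3 r4 : E4 →L[ℝ] E4).det =
      (!![r1.1, r1.2.1, r1.2.2.1, r1.2.2.2;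
          r2.1, r2.2.1, r2.2.2.1, r2.2.2.2;
          r3.1, r3.2.1, r3.2.2.1, r3.2.2.2;
          r4.1, r4.2.1, r4.2.2.1, r4.2.2.2] : Matrix (Fin 4) (Fin 4) ℝ).det := by
  rw [ContinuousLinearMap.det, ← LinearMap.det_toMatrix bE]
  rw [← Matrix.det_reindex_self finSumFinEquiv (LinearMap.toMatrix bE bE (mk4 r1 r2 r3 r4 : E4 →ₗ[ℝ] E4))]
  congr 1
  ext i j
  fin_cases i <;> fin_cases j <;>
    simp [Matrix.reindex_apply, LinearMap.toMatrix_apply, bE, Module.Basis.prod_repr_inl,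
      Module.Basis.prod_repr_inr, Module.Basis.prod_apply, Module.Basis.coe_finTwoProd_repr,
      Module.Basis.finTwoProd_zero, Module.Basis.finTwoProd_one]

-- basic derivative lemmas
lemma hpi1 (x : E4) : HasFDerivAt (fun y : E4 => y.1.1) pi1 x := pi1.hasFDerivAt
lemma hpi2 (x : E4) : HasFDerivAt (fun y : E4 => y.1.2) pi2 x := pi2.hasFDerivAt
lemma hpi3 (x : E4) : HasFDerivAt (fun y : E4 => y.2.1) pi3 x := pi3.hasFDerivAt
lemma hpi4 (x : E4) : HasFDerivAt (fun y : E4 => y.2.2) pi4 x := pi4.hasFDerivAt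

def Q4 : Set E4 := (Ioo (0:ℝ) 1 ×ˢ Ioo (0:ℝ) 1) ×ˢ (Ioo (0:ℝ) 1 ×ˢ Ioo (0:ℝ) 1)

lemma measurableSet_Q4 : MeasurableSet Q4 :=
  (((isOpen_Ioo.prod isOpen_Ioo).prod (isOpen_Ioo.prod isOpen_Ioo)).measurableSet)

section region1
variable (u v w : EuclideanSpace ℝ (Fin 3))

def Ksl : E4 → ℝ := fun P => 1 / ‖(P.1.1 - P.2.1) • v + P.1.2 • w - P.2.2 • u‖

def R1 : Set E4 := {P | (0 < P.1.2 ∧ P.1.2 < P.1.1 ∧ P.1.1 < 1) ∧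
  (0 < P.2.2 ∧ P.2.2 < P.2.1 ∧ P.2.1 < 1) ∧ P.2.1 < P.1.1 ∧ P.1.2 < P.2.2 + (P.1.1 - P.2.1)}

def Phi1 : E4 → E4 := fun x =>
  ((x.1.1 + x.1.2*(1 - x.1.1), x.1.1*x.2.2),
   (x.1.1 + x.1.2*(1 - x.1.1) - x.1.1*x.2.1, x.1.1*(1 - x.2.1)))

def D1 : E4 → (E4 →L[ℝ] E4) := fun x =>
  mk4 (1 - x.1.2, 1 - x.1.1, 0, 0) (x.2.2, 0, 0, x.1.1)
      (1 - x.1.2 - x.2.1, 1 - x.1.1, -x.1.1, 0) (1 - x.2.1, 0, -x.1.1, 0)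

lemma hasFDerivAt_Phi1 (x : E4) : HasFDerivAt Phi1 (D1 x) x := by
  have c1 : HasFDerivAt (fun y : E4 => y.1.1 + y.1.2*(1 - y.1.1))
      (row (1 - x.1.2) (1 - x.1.1) 0 0) x := by
    have h := (hpi1 x).add (((hpi2 x)).mul ((hasFDerivAt_const (1:ℝ) x).sub (hpi1 x)))
    refine h.congr_fderiv (ContinuousLinearMap.ext fun y => ?_)
    simp [row, pi1, pi2, pi3, pi4]
    ring
  have c2 : HasFDerivAt (fun y : E4 => y.1.1*y.2.2) (row x.2.2 0 0 x.1.1) x := by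
    have h := (hpi1 x).mul (hpi4 x)
    refine h.congr_fderiv (ContinuousLinearMap.ext fun y => ?_)
    simp [row, pi1, pi2, pi3, pi4]
    ring
  have c3 : HasFDerivAt (fun y : E4 => y.1.1 + y.1.2*(1 - y.1.1) - y.1.1*y.2.1)
      (row (1 - x.1.2 - x.2.1) (1 - x.1.1) (-x.1.1) 0) x := by
    have h := ((hpi1 x).add (((hpi2 x)).mul ((hasFDerivAt_const (1:ℝ) x).sub (hpi1 x)))).sub
      ((hpi1 x).mul (hpi3 x))
    refine h.congr_fderiv (ContinuousLinearMap.ext fun y => ?_)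
    simp [row, pi1, pi2, pi3, pi4]
    ring
  have c4 : HasFDerivAt (fun y : E4 => y.1.1*(1 - y.2.1)) (row (1 - x.2.1) 0 (-x.1.1) 0) x := by
    have h := (hpi1 x).mul ((hasFDerivAt_const (1:ℝ) x).sub (hpi3 x))
    refine h.congr_fderiv (ContinuousLinearMap.ext fun y => ?_)
    simp [row, pi1, pi2, pi3, pi4]
    ring
  exact (c1.prodMk c2).prodMk (c3.prodMk c4)

lemma det_D1 (x : E4) : (D1 x : E4 →L[ℝ] E4).det = -(x.1.1^2*(1 - x.1.1)) := by
  rw [D1, det_mk4]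
  simp [Matrix.det_succ_row_zero, Fin.sum_univ_succ]; simp [Fin.succAbove, Fin.lt_def]
  ring

def Inv1 : E4 → E4 := fun P =>
  ((P.2.2 + (P.1.1 - P.2.1), (P.1.1 - (P.2.2 + (P.1.1 - P.2.1)))/(1 - (P.2.2 + (P.1.1 - P.2.1)))),
   ((P.1.1 - P.2.1)/(P.2.2 + (P.1.1 - P.2.1)), P.1.2/(P.2.2 + (P.1.1 - P.2.1))))

lemma leftInv1 : ∀ x ∈ Q4, Inv1 (Phi1 x) = x := by
  rintro ⟨⟨s, l⟩, a, b⟩ ⟨⟨hs, hl⟩, ha, hb⟩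
  obtain ⟨hs0, hs1⟩ := hs
  have hs0' : s ≠ 0 := ne_of_gt hs0
  have hs1' : (1:ℝ) - s ≠ 0 := ne_of_gt (by linarith)
  simp only [Inv1, Phi1]
  have hA : s*(1 - a) + ((s + l*(1 - s)) - (s + l*(1 - s) - s*a)) = s := by ring
  rw [hA]
  refine Prod.ext (Prod.ext ?_ ?_) (Prod.ext ?_ ?_) <;> dsimp only <;> (first | rfl | ring1 | (field_simp; try ring1))

lemma injOn_Phi1 : InjOn Phi1 Q4 := fun x hx y hy h => by
  rw [← leftInv1 x hx, ← leftInv1 y hy, h]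

lemma image_Phi1 : Phi1 '' Q4 = R1 := by
  ext P
  constructor
  · rintro ⟨⟨⟨s, l⟩, a, b⟩, hx, rfl⟩
    have hs0 : 0 < s := hx.1.1.1
    have hs1 : s < 1 := hx.1.1.2
    have hl0 : 0 < l := hx.1.2.1
    have hl1 : l < 1 := hx.1.2.2
    have ha0 : 0 < a := hx.2.1.1
    have ha1 : a < 1 := hx.2.1.2
    have hb0 : 0 < b := hx.2.2.1
    have hb1 : b < 1 := hx.2.2.2
    simp only [R1, Phi1, mem_setOf_eq]
    refine ⟨⟨by nlinarith, by nlinarith, by nlinarith⟩,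
      ⟨by nlinarith, by nlinarith, by nlinarith⟩, by nlinarith, by nlinarith⟩
  · rintro ⟨⟨hx20, hx21, hx11⟩, ⟨hy20, hy21, hy11⟩, hyx, hcong⟩
    set x₁ := P.1.1; set x₂ := P.1.2; set y₁ := P.2.1; set y₂ := P.2.2
    have hs0 : 0 < y₂ + (x₁ - y₁) := by simp only [x₁, y₁, y₂]; linarith
    have hs1 : y₂ + (x₁ - y₁) < 1 := by simp only [x₁, y₁, y₂]; linarith
    refine ⟨Inv1 P, ⟨⟨⟨hs0, hs1⟩, ?_, ?_⟩, ⟨?_, ?_⟩, ?_, ?_⟩, ?_⟩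
    · exact div_pos (by linarith) (by linarith)
    · exact (div_lt_one (by linarith)).2 (by linarith)
    · exact div_pos (by linarith) hs0
    · exact (div_lt_one hs0).2 (by linarith)
    · exact div_pos (by linarith) hs0
    · exact (div_lt_one hs0).2 (by linarith)
    · have h1 : y₂ + (x₁ - y₁) ≠ 0 := ne_of_gt hs0
      have h2 : (1:ℝ) - (y₂ + (x₁ - y₁)) ≠ 0 := ne_of_gt (by linarith)
      simp only [Phi1, Inv1]
      have : P = ((x₁, x₂), (y₁, y₂)) := rfl
      rw [this]
      refine Prod.ext (Prod.ext ?_ ?_) (Prod.ext ?_ ?_) <;> dsimp only <;> (first | rfl | ring1 | (field_simp; try ring1))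
end region1

section regions2345
variable (u v w : EuclideanSpace ℝ (Fin 3))

/-! ### Region 2 -/

def R2 : Set E4 := {P | (0 < P.1.2 ∧ P.1.2 < P.1.1 ∧ P.1.1 < 1) ∧
  (0 < P.2.2 ∧ P.2.2 < P.2.1 ∧ P.2.1 < 1) ∧ P.2.1 < P.1.1 ∧ P.2.2 + (P.1.1 - P.2.1) < P.1.2}

def Phi2 : E4 → E4 := fun x =>
  ((x.1.1 + x.1.2*(1 - x.1.1), x.1.1),
   (x.1.1 + x.1.2*(1 - x.1.1) - x.1.1*(x.2.1*x.2.2), x.1.1*(x.2.1*(1 - x.2.2))))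

def D2 : E4 → (E4 →L[ℝ] E4) := fun x =>
  mk4 (1 - x.1.2, 1 - x.1.1, 0, 0) (1, 0, 0, 0)
      (1 - x.1.2 - x.2.1*x.2.2, 1 - x.1.1, -(x.1.1*x.2.2), -(x.1.1*x.2.1))
      (x.2.1*(1 - x.2.2), 0, x.1.1*(1 - x.2.2), -(x.1.1*x.2.1))

lemma hasFDerivAt_Phi2 (x : E4) : HasFDerivAt Phi2 (D2 x) x := by
  have c1 : HasFDerivAt (fun y : E4 => y.1.1 + y.1.2*(1 - y.1.1))
      (row (1 - x.1.2) (1 - x.1.1) 0 0) x := by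
    have h := (hpi1 x).add (((hpi2 x)).mul ((hasFDerivAt_const (1:ℝ) x).sub (hpi1 x)))
    refine h.congr_fderiv (ContinuousLinearMap.ext fun y => ?_)
    simp [row, pi1, pi2, pi3, pi4]
    ring
  have c2 : HasFDerivAt (fun y : E4 => y.1.1) (row 1 0 0 0) x := by
    refine (hpi1 x).congr_fderiv (ContinuousLinearMap.ext fun y => ?_)
    simp [row, pi1, pi2, pi3, pi4]
  have c3 : HasFDerivAt (fun y : E4 => y.1.1 + y.1.2*(1 - y.1.1) - y.1.1*(y.2.1*y.2.2))
      (row (1 - x.1.2 - x.2.1*x.2.2) (1 - x.1.1) (-(x.1.1*x.2.2)) (-(x.1.1*x.2.1))) x := by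
    have h := ((hpi1 x).add (((hpi2 x)).mul ((hasFDerivAt_const (1:ℝ) x).sub (hpi1 x)))).sub
      ((hpi1 x).mul ((hpi3 x).mul (hpi4 x)))
    refine h.congr_fderiv (ContinuousLinearMap.ext fun y => ?_)
    simp [row, pi1, pi2, pi3, pi4]
    ring
  have c4 : HasFDerivAt (fun y : E4 => y.1.1*(y.2.1*(1 - y.2.2)))
      (row (x.2.1*(1 - x.2.2)) 0 (x.1.1*(1 - x.2.2)) (-(x.1.1*x.2.1))) x := by
    have h := (hpi1 x).mul ((hpi3 x).mul ((hasFDerivAt_const (1:ℝ) x).sub (hpi4 x)))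
    refine h.congr_fderiv (ContinuousLinearMap.ext fun y => ?_)
    simp [row, pi1, pi2, pi3, pi4]
    ring
  exact (c1.prodMk c2).prodMk (c3.prodMk c4)

lemma det_D2 (x : E4) : (D2 x : E4 →L[ℝ] E4).det = -(x.1.1^2*x.2.1*(1 - x.1.1)) := by
  rw [D2, det_mk4]
  simp [Matrix.det_succ_row_zero, Fin.sum_univ_succ]; simp [Fin.succAbove, Fin.lt_def]
  ring

def Inv2 : E4 → E4 := fun P =>
  ((P.1.2, (P.1.1 - P.1.2)/(1 - P.1.2)),
   ((P.1.1 - P.2.1 + P.2.2)/P.1.2, (P.1.1 - P.2.1)/(P.1.1 - P.2.1 + P.2.2)))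

lemma leftInv2 : ∀ x ∈ Q4, Inv2 (Phi2 x) = x := by
  rintro ⟨⟨s, l⟩, a, b⟩ ⟨⟨hs, hl⟩, ha, hb⟩
  have hs0' : s ≠ 0 := ne_of_gt hs.1
  have hs1' : (1:ℝ) - s ≠ 0 := ne_of_gt (by linarith [hs.2])
  have ha0' : a ≠ 0 := ne_of_gt ha.1
  simp only [Inv2, Phi2]
  have hA : (s + l*(1 - s)) - (s + l*(1 - s) - s*(a*b)) + s*(a*(1 - b)) = s*a := by ring
  rw [hA]
  have hsa : s*a ≠ 0 := mul_ne_zero hs0' ha0'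
  refine Prod.ext (Prod.ext ?_ ?_) (Prod.ext ?_ ?_) <;> dsimp only <;> (first | rfl | ring1 | (field_simp; try ring1))

lemma injOn_Phi2 : InjOn Phi2 Q4 := fun x hx y hy h => by
  rw [← leftInv2 x hx, ← leftInv2 y hy, h]

lemma image_Phi2 : Phi2 '' Q4 = R2 := by
  ext P
  constructor
  · rintro ⟨⟨⟨s, l⟩, a, b⟩, hx, rfl⟩
    have hs0 : 0 < s := hx.1.1.1
    have hs1 : s < 1 := hx.1.1.2
    have hl0 : 0 < l := hx.1.2.1
    have hl1 : l < 1 := hx.1.2.2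
    have ha0 : 0 < a := hx.2.1.1
    have ha1 : a < 1 := hx.2.1.2
    have hb0 : 0 < b := hx.2.2.1
    have hb1 : b < 1 := hx.2.2.2
    have h1b : 0 < 1 - b := by linarith
    have h1a : 0 < 1 - a := by linarith
    have h1s : 0 < 1 - s := by linarith
    have h1l : 0 < 1 - l := by linarith
    have hab : 0 < a*b := mul_pos ha0 hb0
    have hab1 : a*b < 1 := by nlinarith
    have hsab : 0 < s*(a*b) := mul_pos hs0 hab
    have hsa : 0 < s*a := mul_pos hs0 ha0
    have hsb : 0 < s*b := mul_pos hs0 hb0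
    have hls : 0 < l*(1-s) := mul_pos hl0 h1s
    have hx1lt : s + l*(1-s) < 1 := by nlinarith
    have hsa1 : s*a < s := by nlinarith
    have hsb1 : s*b < s := by nlinarith
    have hsablt : s*(a*b) < s*a := by nlinarith
    have hsa1b : 0 < s*(a*(1-b)) := mul_pos hs0 (mul_pos ha0 h1b)
    have hs1a : 0 < s*(1-a) := mul_pos hs0 h1a
    have hs1ab : 0 < s*(1-a*b) := mul_pos hs0 (by linarith)
    have hs1ablt : s*(1-a*b) ≤ s := by nlinarith
    simp only [R2, Phi2, mem_setOf_eq]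
    refine ⟨⟨by nlinarith, by nlinarith, by nlinarith⟩,
      ⟨by nlinarith, by nlinarith, by nlinarith⟩, by nlinarith, by nlinarith⟩
  · rintro ⟨⟨hx20, hx21, hx11⟩, ⟨hy20, hy21, hy11⟩, hyx, hcong⟩
    set x₁ := P.1.1; set x₂ := P.1.2; set y₁ := P.2.1; set y₂ := P.2.2
    have hd : 0 < x₁ - y₁ + y₂ := by simp only [x₁, y₁, y₂]; linarith
    refine ⟨Inv2 P, ⟨⟨⟨hx20, by show P.1.2 < 1; linarith⟩, ?_, ?_⟩, ⟨?_, ?_⟩, ?_, ?_⟩, ?_⟩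
    · exact div_pos (by linarith) (by linarith)
    · exact (div_lt_one (by linarith)).2 (by linarith)
    · exact div_pos hd hx20
    · exact (div_lt_one hx20).2 (by linarith)
    · exact div_pos (by linarith) hd
    · exact (div_lt_one hd).2 (by linarith)
    · have h1 : x₂ ≠ 0 := ne_of_gt hx20
      have h2 : (1:ℝ) - x₂ ≠ 0 := ne_of_gt (by linarith)
      have h3 : x₁ - y₁ + y₂ ≠ 0 := ne_of_gt hd
      simp only [Phi2, Inv2]
      have hP : P = ((x₁, x₂), (y₁, y₂)) := rfl
      rw [hP]
      refine Prod.ext (Prod.ext ?_ ?_) (Prod.ext ?_ ?_) <;> dsimp only <;> (first | rfl | ring1 | (field_simp; try ring1))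

/-! ### Region 3 -/

def R3 : Set E4 := {P | (0 < P.1.2 ∧ P.1.2 < P.1.1 ∧ P.1.1 < 1) ∧
  (0 < P.2.2 ∧ P.2.2 < P.2.1 ∧ P.2.1 < 1) ∧ P.1.1 < P.2.1 ∧ P.1.2 < P.2.2 - (P.2.1 - P.1.1)}

def Phi3 : E4 → E4 := fun x =>
  ((x.1.1*(1 - x.2.1*x.2.2) + x.1.2*(1 - x.1.1), x.1.1*(x.2.1*(1 - x.2.2))),
   (x.1.1 + x.1.2*(1 - x.1.1), x.1.1))

def D3 : E4 → (E4 →L[ℝ] E4) := fun x =>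
  mk4 (1 - x.2.1*x.2.2 - x.1.2, 1 - x.1.1, -(x.1.1*x.2.2), -(x.1.1*x.2.1))
      (x.2.1*(1 - x.2.2), 0, x.1.1*(1 - x.2.2), -(x.1.1*x.2.1))
      (1 - x.1.2, 1 - x.1.1, 0, 0) (1, 0, 0, 0)

lemma hasFDerivAt_Phi3 (x : E4) : HasFDerivAt Phi3 (D3 x) x := by
  have c1 : HasFDerivAt (fun y : E4 => y.1.1*(1 - y.2.1*y.2.2) + y.1.2*(1 - y.1.1))
      (row (1 - x.2.1*x.2.2 - x.1.2) (1 - x.1.1) (-(x.1.1*x.2.2)) (-(x.1.1*x.2.1))) x := by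
    have h := ((hpi1 x).mul ((hasFDerivAt_const (1:ℝ) x).sub ((hpi3 x).mul (hpi4 x)))).add
      (((hpi2 x)).mul ((hasFDerivAt_const (1:ℝ) x).sub (hpi1 x)))
    refine h.congr_fderiv (ContinuousLinearMap.ext fun y => ?_)
    simp [row, pi1, pi2, pi3, pi4]
    ring
  have c2 : HasFDerivAt (fun y : E4 => y.1.1*(y.2.1*(1 - y.2.2)))
      (row (x.2.1*(1 - x.2.2)) 0 (x.1.1*(1 - x.2.2)) (-(x.1.1*x.2.1))) x := by
    have h := (hpi1 x).mul ((hpi3 x).mul ((hasFDerivAt_const (1:ℝ) x).sub (hpi4 x)))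
    refine h.congr_fderiv (ContinuousLinearMap.ext fun y => ?_)
    simp [row, pi1, pi2, pi3, pi4]
    ring
  have c3 : HasFDerivAt (fun y : E4 => y.1.1 + y.1.2*(1 - y.1.1))
      (row (1 - x.1.2) (1 - x.1.1) 0 0) x := by
    have h := (hpi1 x).add (((hpi2 x)).mul ((hasFDerivAt_const (1:ℝ) x).sub (hpi1 x)))
    refine h.congr_fderiv (ContinuousLinearMap.ext fun y => ?_)
    simp [row, pi1, pi2, pi3, pi4]
    ring
  have c4 : HasFDerivAt (fun y : E4 => y.1.1) (row 1 0 0 0) x := by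
    refine (hpi1 x).congr_fderiv (ContinuousLinearMap.ext fun y => ?_)
    simp [row, pi1, pi2, pi3, pi4]
  exact (c1.prodMk c2).prodMk (c3.prodMk c4)

lemma det_D3 (x : E4) : (D3 x : E4 →L[ℝ] E4).det = -(x.1.1^2*x.2.1*(1 - x.1.1)) := by
  rw [D3, det_mk4]
  simp [Matrix.det_succ_row_zero, Fin.sum_univ_succ]; simp [Fin.succAbove, Fin.lt_def]
  ring

def Inv3 : E4 → E4 := fun P =>
  ((P.2.2, (P.2.1 - P.2.2)/(1 - P.2.2)),
   ((P.2.1 - P.1.1 + P.1.2)/P.2.2, (P.2.1 - P.1.1)/(P.2.1 - P.1.1 + P.1.2)))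

lemma leftInv3 : ∀ x ∈ Q4, Inv3 (Phi3 x) = x := by
  rintro ⟨⟨s, l⟩, a, b⟩ ⟨⟨hs, hl⟩, ha, hb⟩
  have hs0' : s ≠ 0 := ne_of_gt hs.1
  have hs1' : (1:ℝ) - s ≠ 0 := ne_of_gt (by linarith [hs.2])
  have ha0' : a ≠ 0 := ne_of_gt ha.1
  simp only [Inv3, Phi3]
  have hA : (s + l*(1 - s)) - (s*(1 - a*b) + l*(1 - s)) + s*(a*(1 - b)) = s*a := by ring
  rw [hA]
  have hsa : s*a ≠ 0 := mul_ne_zero hs0' ha0'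
  refine Prod.ext (Prod.ext ?_ ?_) (Prod.ext ?_ ?_) <;> dsimp only <;> (first | rfl | ring1 | (field_simp; try ring1))

lemma injOn_Phi3 : InjOn Phi3 Q4 := fun x hx y hy h => by
  rw [← leftInv3 x hx, ← leftInv3 y hy, h]

lemma image_Phi3 : Phi3 '' Q4 = R3 := by
  ext P
  constructor
  · rintro ⟨⟨⟨s, l⟩, a, b⟩, hx, rfl⟩
    have hs0 : 0 < s := hx.1.1.1
    have hs1 : s < 1 := hx.1.1.2
    have hl0 : 0 < l := hx.1.2.1
    have hl1 : l < 1 := hx.1.2.2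
    have ha0 : 0 < a := hx.2.1.1
    have ha1 : a < 1 := hx.2.1.2
    have hb0 : 0 < b := hx.2.2.1
    have hb1 : b < 1 := hx.2.2.2
    have h1b : 0 < 1 - b := by linarith
    have h1a : 0 < 1 - a := by linarith
    have h1s : 0 < 1 - s := by linarith
    have h1l : 0 < 1 - l := by linarith
    have hab : 0 < a*b := mul_pos ha0 hb0
    have hab1 : a*b < 1 := by nlinarith
    have hsab : 0 < s*(a*b) := mul_pos hs0 hab
    have hsa : 0 < s*a := mul_pos hs0 ha0
    have hsb : 0 < s*b := mul_pos hs0 hb0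
    have hls : 0 < l*(1-s) := mul_pos hl0 h1s
    have hx1lt : s + l*(1-s) < 1 := by nlinarith
    have hsa1 : s*a < s := by nlinarith
    have hsb1 : s*b < s := by nlinarith
    have hsablt : s*(a*b) < s*a := by nlinarith
    have hsa1b : 0 < s*(a*(1-b)) := mul_pos hs0 (mul_pos ha0 h1b)
    have hs1a : 0 < s*(1-a) := mul_pos hs0 h1a
    have hs1ab : 0 < s*(1-a*b) := mul_pos hs0 (by linarith)
    have hs1ablt : s*(1-a*b) ≤ s := by nlinarith
    simp only [R3, Phi3, mem_setOf_eq]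
    refine ⟨⟨by nlinarith, by nlinarith, by nlinarith⟩,
      ⟨by nlinarith, by nlinarith, by nlinarith⟩, by nlinarith, by nlinarith⟩
  · rintro ⟨⟨hx20, hx21, hx11⟩, ⟨hy20, hy21, hy11⟩, hxy, hcong⟩
    set x₁ := P.1.1; set x₂ := P.1.2; set y₁ := P.2.1; set y₂ := P.2.2
    have hd : 0 < y₁ - x₁ + x₂ := by simp only [x₁, y₁, x₂]; linarith
    refine ⟨Inv3 P, ⟨⟨⟨hy20, by show P.2.2 < 1; linarith⟩, ?_, ?_⟩, ⟨?_, ?_⟩, ?_, ?_⟩, ?_⟩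
    · exact div_pos (by linarith) (by linarith)
    · exact (div_lt_one (by linarith)).2 (by linarith)
    · exact div_pos hd hy20
    · exact (div_lt_one hy20).2 (by linarith)
    · exact div_pos (by linarith) hd
    · exact (div_lt_one hd).2 (by linarith)
    · have h1 : y₂ ≠ 0 := ne_of_gt hy20
      have h2 : (1:ℝ) - y₂ ≠ 0 := ne_of_gt (by linarith)
      have h3 : y₁ - x₁ + x₂ ≠ 0 := ne_of_gt hd
      simp only [Phi3, Inv3]
      have hP : P = ((x₁, x₂), (y₁, y₂)) := rfl
      rw [hP]
      refine Prod.ext (Prod.ext ?_ ?_) (Prod.ext ?_ ?_) <;> dsimp only <;> (first | rfl | ring1 | (field_simp; try ring1))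

/-! ### Region 4 -/

def R4 : Set E4 := {P | (0 < P.1.2 ∧ P.1.2 < P.1.1 ∧ P.1.1 < 1) ∧
  (0 < P.2.2 ∧ P.2.2 < P.2.1 ∧ P.2.1 < 1) ∧ P.1.1 < P.2.1 ∧ P.2.2 < P.2.1 - P.1.1}

def Phi4 : E4 → E4 := fun x =>
  ((x.1.1*(1 - x.2.1) + x.1.2*(1 - x.1.1), x.1.1*(1 - x.2.1)),
   (x.1.1 + x.1.2*(1 - x.1.1), x.1.1*(x.2.1*x.2.2)))

def D4 : E4 → (E4 →L[ℝ] E4) := fun x =>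
  mk4 (1 - x.2.1 - x.1.2, 1 - x.1.1, -x.1.1, 0)
      (1 - x.2.1, 0, -x.1.1, 0)
      (1 - x.1.2, 1 - x.1.1, 0, 0)
      (x.2.1*x.2.2, 0, x.1.1*x.2.2, x.1.1*x.2.1)

lemma hasFDerivAt_Phi4 (x : E4) : HasFDerivAt Phi4 (D4 x) x := by
  have c1 : HasFDerivAt (fun y : E4 => y.1.1*(1 - y.2.1) + y.1.2*(1 - y.1.1))
      (row (1 - x.2.1 - x.1.2) (1 - x.1.1) (-x.1.1) 0) x := by
    have h := ((hpi1 x).mul ((hasFDerivAt_const (1:ℝ) x).sub (hpi3 x))).add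
      (((hpi2 x)).mul ((hasFDerivAt_const (1:ℝ) x).sub (hpi1 x)))
    refine h.congr_fderiv (ContinuousLinearMap.ext fun y => ?_)
    simp [row, pi1, pi2, pi3, pi4]
    ring
  have c2 : HasFDerivAt (fun y : E4 => y.1.1*(1 - y.2.1)) (row (1 - x.2.1) 0 (-x.1.1) 0) x := by
    have h := (hpi1 x).mul ((hasFDerivAt_const (1:ℝ) x).sub (hpi3 x))
    refine h.congr_fderiv (ContinuousLinearMap.ext fun y => ?_)
    simp [row, pi1, pi2, pi3, pi4]
    ring
  have c3 : HasFDerivAt (fun y : E4 => y.1.1 + y.1.2*(1 - y.1.1))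
      (row (1 - x.1.2) (1 - x.1.1) 0 0) x := by
    have h := (hpi1 x).add (((hpi2 x)).mul ((hasFDerivAt_const (1:ℝ) x).sub (hpi1 x)))
    refine h.congr_fderiv (ContinuousLinearMap.ext fun y => ?_)
    simp [row, pi1, pi2, pi3, pi4]
    ring
  have c4 : HasFDerivAt (fun y : E4 => y.1.1*(y.2.1*y.2.2))
      (row (x.2.1*x.2.2) 0 (x.1.1*x.2.2) (x.1.1*x.2.1)) x := by
    have h := (hpi1 x).mul ((hpi3 x).mul (hpi4 x))
    refine h.congr_fderiv (ContinuousLinearMap.ext fun y => ?_)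
    simp [row, pi1, pi2, pi3, pi4]
    ring
  exact (c1.prodMk c2).prodMk (c3.prodMk c4)

lemma det_D4 (x : E4) : (D4 x : E4 →L[ℝ] E4).det = -(x.1.1^2*x.2.1*(1 - x.1.1)) := by
  rw [D4, det_mk4]
  simp [Matrix.det_succ_row_zero, Fin.sum_univ_succ]; simp [Fin.succAbove, Fin.lt_def]
  ring

def Inv4 : E4 → E4 := fun P =>
  ((P.1.2 + (P.2.1 - P.1.1),
    (P.2.1 - (P.1.2 + (P.2.1 - P.1.1)))/(1 - (P.1.2 + (P.2.1 - P.1.1)))),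
   ((P.2.1 - P.1.1)/(P.1.2 + (P.2.1 - P.1.1)), P.2.2/(P.2.1 - P.1.1)))

lemma leftInv4 : ∀ x ∈ Q4, Inv4 (Phi4 x) = x := by
  rintro ⟨⟨s, l⟩, a, b⟩ ⟨⟨hs, hl⟩, ha, hb⟩
  have hs0' : s ≠ 0 := ne_of_gt hs.1
  have hs1' : (1:ℝ) - s ≠ 0 := ne_of_gt (by linarith [hs.2])
  have ha0' : a ≠ 0 := ne_of_gt ha.1
  simp only [Inv4, Phi4]
  have hA : s*(1 - a) + ((s + l*(1 - s)) - (s*(1 - a) + l*(1 - s))) = s := by ring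
  have hB : (s + l*(1 - s)) - (s*(1 - a) + l*(1 - s)) = s*a := by ring
  rw [hA, hB]
  have hsa : s*a ≠ 0 := mul_ne_zero hs0' ha0'
  refine Prod.ext (Prod.ext ?_ ?_) (Prod.ext ?_ ?_) <;> dsimp only <;> (first | rfl | ring1 | (field_simp; try ring1))

lemma injOn_Phi4 : InjOn Phi4 Q4 := fun x hx y hy h => by
  rw [← leftInv4 x hx, ← leftInv4 y hy, h]

lemma image_Phi4 : Phi4 '' Q4 = R4 := by
  ext P
  constructor
  · rintro ⟨⟨⟨s, l⟩, a, b⟩, hx, rfl⟩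
    have hs0 : 0 < s := hx.1.1.1
    have hs1 : s < 1 := hx.1.1.2
    have hl0 : 0 < l := hx.1.2.1
    have hl1 : l < 1 := hx.1.2.2
    have ha0 : 0 < a := hx.2.1.1
    have ha1 : a < 1 := hx.2.1.2
    have hb0 : 0 < b := hx.2.2.1
    have hb1 : b < 1 := hx.2.2.2
    have h1b : 0 < 1 - b := by linarith
    have h1a : 0 < 1 - a := by linarith
    have h1s : 0 < 1 - s := by linarith
    have h1l : 0 < 1 - l := by linarith
    have hab : 0 < a*b := mul_pos ha0 hb0
    have hab1 : a*b < 1 := by nlinarith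
    have hsab : 0 < s*(a*b) := mul_pos hs0 hab
    have hsa : 0 < s*a := mul_pos hs0 ha0
    have hsb : 0 < s*b := mul_pos hs0 hb0
    have hls : 0 < l*(1-s) := mul_pos hl0 h1s
    have hx1lt : s + l*(1-s) < 1 := by nlinarith
    have hsa1 : s*a < s := by nlinarith
    have hsb1 : s*b < s := by nlinarith
    have hsablt : s*(a*b) < s*a := by nlinarith
    have hsa1b : 0 < s*(a*(1-b)) := mul_pos hs0 (mul_pos ha0 h1b)
    have hs1a : 0 < s*(1-a) := mul_pos hs0 h1a
    have hs1ab : 0 < s*(1-a*b) := mul_pos hs0 (by linarith)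
    have hs1ablt : s*(1-a*b) ≤ s := by nlinarith
    simp only [R4, Phi4, mem_setOf_eq]
    refine ⟨⟨by nlinarith, by nlinarith, by nlinarith⟩,
      ⟨by nlinarith, by nlinarith, by nlinarith⟩, by nlinarith, by nlinarith⟩
  · rintro ⟨⟨hx20, hx21, hx11⟩, ⟨hy20, hy21, hy11⟩, hxy, hcong⟩
    set x₁ := P.1.1; set x₂ := P.1.2; set y₁ := P.2.1; set y₂ := P.2.2
    have hz : 0 < y₁ - x₁ := by simp only [x₁, y₁]; linarith
    have hd : 0 < x₂ + (y₁ - x₁) := by linarith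
    have hd1 : x₂ + (y₁ - x₁) < 1 := by linarith
    refine ⟨Inv4 P, ⟨⟨⟨hd, hd1⟩, ?_, ?_⟩, ⟨?_, ?_⟩, ?_, ?_⟩, ?_⟩
    · exact div_pos (by linarith) (by linarith)
    · exact (div_lt_one (by linarith)).2 (by linarith)
    · exact div_pos hz hd
    · exact (div_lt_one hd).2 (by linarith)
    · exact div_pos (by linarith) hz
    · exact (div_lt_one hz).2 (by linarith)
    · have h1 : x₂ + (y₁ - x₁) ≠ 0 := ne_of_gt hd
      have h2 : (1:ℝ) - (x₂ + (y₁ - x₁)) ≠ 0 := ne_of_gt (by linarith)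
      have h3 : y₁ - x₁ ≠ 0 := ne_of_gt hz
      simp only [Phi4, Inv4]
      have hP : P = ((x₁, x₂), (y₁, y₂)) := rfl
      rw [hP]
      refine Prod.ext (Prod.ext ?_ ?_) (Prod.ext ?_ ?_) <;> dsimp only <;> (first | rfl | ring1 | (field_simp; try ring1))

/-! ### Region 5 -/

def R5 : Set E4 := {P | (0 < P.1.2 ∧ P.1.2 < P.1.1 ∧ P.1.1 < 1) ∧
  (0 < P.2.2 ∧ P.2.2 < P.2.1 ∧ P.2.1 < 1) ∧ P.1.1 < P.2.1 ∧ P.2.1 - P.1.1 < P.2.2 ∧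
  P.2.2 - (P.2.1 - P.1.1) < P.1.2}

def Phi5 : E4 → E4 := fun x =>
  ((x.1.1*(1 - x.2.1*x.2.2) + x.1.2*(1 - x.1.1), x.1.1*(1 - x.2.1*x.2.2)),
   (x.1.1 + x.1.2*(1 - x.1.1), x.1.1*x.2.1))

def D5 : E4 → (E4 →L[ℝ] E4) := fun x =>
  mk4 (1 - x.2.1*x.2.2 - x.1.2, 1 - x.1.1, -(x.1.1*x.2.2), -(x.1.1*x.2.1))
      (1 - x.2.1*x.2.2, 0, -(x.1.1*x.2.2), -(x.1.1*x.2.1))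
      (1 - x.1.2, 1 - x.1.1, 0, 0)
      (x.2.1, 0, x.1.1, 0)

lemma hasFDerivAt_Phi5 (x : E4) : HasFDerivAt Phi5 (D5 x) x := by
  have c1 : HasFDerivAt (fun y : E4 => y.1.1*(1 - y.2.1*y.2.2) + y.1.2*(1 - y.1.1))
      (row (1 - x.2.1*x.2.2 - x.1.2) (1 - x.1.1) (-(x.1.1*x.2.2)) (-(x.1.1*x.2.1))) x := by
    have h := ((hpi1 x).mul ((hasFDerivAt_const (1:ℝ) x).sub ((hpi3 x).mul (hpi4 x)))).add
      (((hpi2 x)).mul ((hasFDerivAt_const (1:ℝ) x).sub (hpi1 x)))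
    refine h.congr_fderiv (ContinuousLinearMap.ext fun y => ?_)
    simp [row, pi1, pi2, pi3, pi4]
    ring
  have c2 : HasFDerivAt (fun y : E4 => y.1.1*(1 - y.2.1*y.2.2))
      (row (1 - x.2.1*x.2.2) 0 (-(x.1.1*x.2.2)) (-(x.1.1*x.2.1))) x := by
    have h := (hpi1 x).mul ((hasFDerivAt_const (1:ℝ) x).sub ((hpi3 x).mul (hpi4 x)))
    refine h.congr_fderiv (ContinuousLinearMap.ext fun y => ?_)
    simp [row, pi1, pi2, pi3, pi4]
    ring
  have c3 : HasFDerivAt (fun y : E4 => y.1.1 + y.1.2*(1 - y.1.1))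
      (row (1 - x.1.2) (1 - x.1.1) 0 0) x := by
    have h := (hpi1 x).add (((hpi2 x)).mul ((hasFDerivAt_const (1:ℝ) x).sub (hpi1 x)))
    refine h.congr_fderiv (ContinuousLinearMap.ext fun y => ?_)
    simp [row, pi1, pi2, pi3, pi4]
    ring
  have c4 : HasFDerivAt (fun y : E4 => y.1.1*y.2.1) (row x.2.1 0 x.1.1 0) x := by
    have h := (hpi1 x).mul (hpi3 x)
    refine h.congr_fderiv (ContinuousLinearMap.ext fun y => ?_)
    simp [row, pi1, pi2, pi3, pi4]
    ring
  exact (c1.prodMk c2).prodMk (c3.prodMk c4)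

lemma det_D5 (x : E4) : (D5 x : E4 →L[ℝ] E4).det = x.1.1^2*x.2.1*(1 - x.1.1) := by
  rw [D5, det_mk4]
  simp [Matrix.det_succ_row_zero, Fin.sum_univ_succ]; simp [Fin.succAbove, Fin.lt_def]
  ring

def Inv5 : E4 → E4 := fun P =>
  ((P.1.2 + (P.2.1 - P.1.1),
    (P.2.1 - (P.1.2 + (P.2.1 - P.1.1)))/(1 - (P.1.2 + (P.2.1 - P.1.1)))),
   (P.2.2/(P.1.2 + (P.2.1 - P.1.1)), (P.2.1 - P.1.1)/P.2.2))

lemma leftInv5 : ∀ x ∈ Q4, Inv5 (Phi5 x) = x := by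
  rintro ⟨⟨s, l⟩, a, b⟩ ⟨⟨hs, hl⟩, ha, hb⟩
  have hs0' : s ≠ 0 := ne_of_gt hs.1
  have hs1' : (1:ℝ) - s ≠ 0 := ne_of_gt (by linarith [hs.2])
  have ha0' : a ≠ 0 := ne_of_gt ha.1
  simp only [Inv5, Phi5]
  have hA : s*(1 - a*b) + ((s + l*(1 - s)) - (s*(1 - a*b) + l*(1 - s))) = s := by ring
  have hB : (s + l*(1 - s)) - (s*(1 - a*b) + l*(1 - s)) = s*(a*b) := by ring
  rw [hA, hB]
  have hsa : s*a ≠ 0 := mul_ne_zero hs0' ha0'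
  refine Prod.ext (Prod.ext ?_ ?_) (Prod.ext ?_ ?_) <;> dsimp only <;> (first | rfl | ring1 | (field_simp; try ring1))

lemma injOn_Phi5 : InjOn Phi5 Q4 := fun x hx y hy h => by
  rw [← leftInv5 x hx, ← leftInv5 y hy, h]

lemma image_Phi5 : Phi5 '' Q4 = R5 := by
  ext P
  constructor
  · rintro ⟨⟨⟨s, l⟩, a, b⟩, hx, rfl⟩
    have hs0 : 0 < s := hx.1.1.1
    have hs1 : s < 1 := hx.1.1.2
    have hl0 : 0 < l := hx.1.2.1
    have hl1 : l < 1 := hx.1.2.2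
    have ha0 : 0 < a := hx.2.1.1
    have ha1 : a < 1 := hx.2.1.2
    have hb0 : 0 < b := hx.2.2.1
    have hb1 : b < 1 := hx.2.2.2
    have h1b : 0 < 1 - b := by linarith
    have h1a : 0 < 1 - a := by linarith
    have h1s : 0 < 1 - s := by linarith
    have h1l : 0 < 1 - l := by linarith
    have hab : 0 < a*b := mul_pos ha0 hb0
    have hab1 : a*b < 1 := by nlinarith
    have hsab : 0 < s*(a*b) := mul_pos hs0 hab
    have hsa : 0 < s*a := mul_pos hs0 ha0
    have hsb : 0 < s*b := mul_pos hs0 hb0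
    have hls : 0 < l*(1-s) := mul_pos hl0 h1s
    have hx1lt : s + l*(1-s) < 1 := by nlinarith
    have hsa1 : s*a < s := by nlinarith
    have hsb1 : s*b < s := by nlinarith
    have hsablt : s*(a*b) < s*a := by nlinarith
    have hsa1b : 0 < s*(a*(1-b)) := mul_pos hs0 (mul_pos ha0 h1b)
    have hs1a : 0 < s*(1-a) := mul_pos hs0 h1a
    have hs1ab : 0 < s*(1-a*b) := mul_pos hs0 (by linarith)
    have hs1ablt : s*(1-a*b) ≤ s := by nlinarith
    simp only [R5, Phi5, mem_setOf_eq]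
    refine ⟨⟨by nlinarith, by nlinarith, by nlinarith⟩,
      ⟨by nlinarith, by nlinarith, by nlinarith⟩, by nlinarith, by nlinarith, by nlinarith⟩
  · rintro ⟨⟨hx20, hx21, hx11⟩, ⟨hy20, hy21, hy11⟩, hxy, hcong1, hcong2⟩
    set x₁ := P.1.1; set x₂ := P.1.2; set y₁ := P.2.1; set y₂ := P.2.2
    have hz : 0 < y₁ - x₁ := by simp only [x₁, y₁]; linarith
    have hd : 0 < x₂ + (y₁ - x₁) := by linarith
    have hd1 : x₂ + (y₁ - x₁) < 1 := by linarith
    refine ⟨Inv5 P, ⟨⟨⟨hd, hd1⟩, ?_, ?_⟩, ⟨?_, ?_⟩, ?_, ?_⟩, ?_⟩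
    · exact div_pos (by linarith) (by linarith)
    · exact (div_lt_one (by linarith)).2 (by linarith)
    · exact div_pos (by linarith) hd
    · exact (div_lt_one hd).2 (by linarith)
    · exact div_pos hz (by linarith)
    · exact (div_lt_one (by linarith)).2 (by linarith)
    · have h1 : x₂ + (y₁ - x₁) ≠ 0 := ne_of_gt hd
      have h2 : (1:ℝ) - (x₂ + (y₁ - x₁)) ≠ 0 := ne_of_gt (by linarith)
      have h3 : y₂ ≠ 0 := ne_of_gt hy20
      simp only [Phi5, Inv5]
      have hP : P = ((x₁, x₂), (y₁, y₂)) := rfl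
      rw [hP]
      refine Prod.ext (Prod.ext ?_ ?_) (Prod.ext ?_ ?_) <;> dsimp only <;> (first | rfl | ring1 | (field_simp; try ring1))

end regions2345


lemma jac_cancel {s c T : ℝ} (hs : s ≠ 0) : s^2*c*(s*T)⁻¹ = s*c*T⁻¹ := by
  rw [mul_inv]
  have hss : s*s⁻¹ = 1 := mul_inv_cancel₀ hs
  linear_combination (s*c*T⁻¹)*hss

lemma jac_cancel' {s a c T : ℝ} (hs : s ≠ 0) : s^2*a*c*(s*T)⁻¹ = s*c*(a*T⁻¹) := by
  rw [mul_inv]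
  have hss : s*s⁻¹ = 1 := mul_inv_cancel₀ hs
  linear_combination (s*a*c*T⁻¹)*hss

section lint
variable (u v w : EuclideanSpace ℝ (Fin 3))

lemma lint_R1 : ∫⁻ P in R1, ENNReal.ofReal (Ksl u v w P) =
    ∫⁻ x in Q4, ENNReal.ofReal (x.1.1*(1 - x.1.1)) *
      ENNReal.ofReal (1 / ‖x.2.1 • (u + v) + x.2.2 • w - u‖) := by
  rw [← image_Phi1]
  rw [lintegral_image_eq_lintegral_abs_det_fderiv_mul volume measurableSet_Q4
    (fun x _ => (hasFDerivAt_Phi1 x).hasFDerivWithinAt) injOn_Phi1]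
  refine setLIntegral_congr_fun_ae measurableSet_Q4 (ae_of_all _ ?_)
  rintro ⟨⟨s, l⟩, a, b⟩ hx
  have hs0 : 0 < s := hx.1.1.1
  have hs1 : s < 1 := hx.1.1.2
  have ha1 : a < 1 := hx.2.1.2
  rw [det_D1]
  simp only [Ksl, Phi1]
  have hvec : ((s + l*(1-s)) - (s + l*(1-s) - s*a)) • v + (s*b) • w - (s*(1-a)) • u
      = s • (a • (u + v) + b • w - u) := by module
  rw [hvec, norm_smul, Real.norm_eq_abs, abs_of_pos hs0, abs_neg,
    abs_of_nonneg (by nlinarith : (0:ℝ) ≤ s^2*(1 - s))]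
  rw [← ENNReal.ofReal_mul (by nlinarith), ← ENNReal.ofReal_mul (by nlinarith)]
  congr 1
  rw [one_div, one_div]
  exact jac_cancel (ne_of_gt hs0)

lemma lint_R2 : ∫⁻ P in R2, ENNReal.ofReal (Ksl u v w P) =
    ∫⁻ x in Q4, ENNReal.ofReal (x.1.1*(1 - x.1.1)) *
      ENNReal.ofReal (x.2.1 / ‖(x.2.1 * x.2.2) • (u + v) - x.2.1 • u + w‖) := by
  rw [← image_Phi2]
  rw [lintegral_image_eq_lintegral_abs_det_fderiv_mul volume measurableSet_Q4
    (fun x _ => (hasFDerivAt_Phi2 x).hasFDerivWithinAt) injOn_Phi2]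
  refine setLIntegral_congr_fun_ae measurableSet_Q4 (ae_of_all _ ?_)
  rintro ⟨⟨s, l⟩, a, b⟩ hx
  have hs0 : 0 < s := hx.1.1.1
  have hs1 : s < 1 := hx.1.1.2
  have ha0 : 0 < a := hx.2.1.1
  rw [det_D2]
  simp only [Ksl, Phi2]
  have hvec : ((s + l*(1-s)) - (s + l*(1-s) - s*(a*b))) • v + s • w - (s*(a*(1-b))) • u
      = s • ((a*b) • (u + v) - a • u + w) := by module
  rw [hvec, norm_smul, Real.norm_eq_abs, abs_of_pos hs0, abs_neg,
    abs_of_nonneg (mul_nonneg (mul_nonneg (sq_nonneg s) ha0.le) (by linarith : (0:ℝ) ≤ 1 - s))]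
  rw [← ENNReal.ofReal_mul (mul_nonneg (mul_nonneg (sq_nonneg s) ha0.le) (by linarith : (0:ℝ) ≤ 1 - s)), ← ENNReal.ofReal_mul (by nlinarith)]
  congr 1
  rw [one_div, div_eq_mul_inv]
  exact jac_cancel' (ne_of_gt hs0)

lemma lint_R3 : ∫⁻ P in R3, ENNReal.ofReal (Ksl u v w P) =
    ∫⁻ x in Q4, ENNReal.ofReal (x.1.1*(1 - x.1.1)) *
      ENNReal.ofReal (x.2.1 / ‖(x.2.1 * x.2.2) • (w + v) - x.2.1 • w + u‖) := by
  rw [← image_Phi3]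
  rw [lintegral_image_eq_lintegral_abs_det_fderiv_mul volume measurableSet_Q4
    (fun x _ => (hasFDerivAt_Phi3 x).hasFDerivWithinAt) injOn_Phi3]
  refine setLIntegral_congr_fun_ae measurableSet_Q4 (ae_of_all _ ?_)
  rintro ⟨⟨s, l⟩, a, b⟩ hx
  have hs0 : 0 < s := hx.1.1.1
  have hs1 : s < 1 := hx.1.1.2
  have ha0 : 0 < a := hx.2.1.1
  rw [det_D3]
  simp only [Ksl, Phi3]
  have hvec : ((s*(1 - a*b) + l*(1-s)) - (s + l*(1-s))) • v + (s*(a*(1-b))) • w - s • u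
      = (-s) • ((a*b) • (w + v) - a • w + u) := by module
  rw [hvec, norm_smul, Real.norm_eq_abs, abs_neg, abs_neg,
    abs_of_nonneg (mul_nonneg (mul_nonneg (sq_nonneg s) ha0.le) (by linarith : (0:ℝ) ≤ 1 - s)), abs_of_pos hs0]
  rw [← ENNReal.ofReal_mul (mul_nonneg (mul_nonneg (sq_nonneg s) ha0.le) (by linarith : (0:ℝ) ≤ 1 - s)), ← ENNReal.ofReal_mul (by nlinarith)]
  congr 1
  rw [one_div, div_eq_mul_inv]
  exact jac_cancel' (ne_of_gt hs0)

lemma lint_R4 : ∫⁻ P in R4, ENNReal.ofReal (Ksl u v w P) =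
    ∫⁻ x in Q4, ENNReal.ofReal (x.1.1*(1 - x.1.1)) *
      ENNReal.ofReal (x.2.1 / ‖(x.2.1 * x.2.2) • u + x.2.1 • (w + v) - w‖) := by
  rw [← image_Phi4]
  rw [lintegral_image_eq_lintegral_abs_det_fderiv_mul volume measurableSet_Q4
    (fun x _ => (hasFDerivAt_Phi4 x).hasFDerivWithinAt) injOn_Phi4]
  refine setLIntegral_congr_fun_ae measurableSet_Q4 (ae_of_all _ ?_)
  rintro ⟨⟨s, l⟩, a, b⟩ hx
  have hs0 : 0 < s := hx.1.1.1
  have hs1 : s < 1 := hx.1.1.2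
  have ha0 : 0 < a := hx.2.1.1
  rw [det_D4]
  simp only [Ksl, Phi4]
  have hvec : ((s*(1 - a) + l*(1-s)) - (s + l*(1-s))) • v + (s*(1-a)) • w - (s*(a*b)) • u
      = (-s) • ((a*b) • u + a • (w + v) - w) := by module
  rw [hvec, norm_smul, Real.norm_eq_abs, abs_neg, abs_neg,
    abs_of_nonneg (mul_nonneg (mul_nonneg (sq_nonneg s) ha0.le) (by linarith : (0:ℝ) ≤ 1 - s)), abs_of_pos hs0]
  rw [← ENNReal.ofReal_mul (mul_nonneg (mul_nonneg (sq_nonneg s) ha0.le) (by linarith : (0:ℝ) ≤ 1 - s)), ← ENNReal.ofReal_mul (by nlinarith)]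
  congr 1
  rw [one_div, div_eq_mul_inv]
  exact jac_cancel' (ne_of_gt hs0)

lemma lint_R5 : ∫⁻ P in R5, ENNReal.ofReal (Ksl u v w P) =
    ∫⁻ x in Q4, ENNReal.ofReal (x.1.1*(1 - x.1.1)) *
      ENNReal.ofReal (x.2.1 / ‖(x.2.1 * x.2.2) • (w + v) + x.2.1 • u - w‖) := by
  rw [← image_Phi5]
  rw [lintegral_image_eq_lintegral_abs_det_fderiv_mul volume measurableSet_Q4
    (fun x _ => (hasFDerivAt_Phi5 x).hasFDerivWithinAt) injOn_Phi5]
  refine setLIntegral_congr_fun_ae measurableSet_Q4 (ae_of_all _ ?_)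
  rintro ⟨⟨s, l⟩, a, b⟩ hx
  have hs0 : 0 < s := hx.1.1.1
  have hs1 : s < 1 := hx.1.1.2
  have ha0 : 0 < a := hx.2.1.1
  rw [det_D5]
  simp only [Ksl, Phi5]
  have hvec : ((s*(1 - a*b) + l*(1-s)) - (s + l*(1-s))) • v + (s*(1 - a*b)) • w - (s*a) • u
      = (-s) • ((a*b) • (w + v) + a • u - w) := by module
  rw [hvec, norm_smul, Real.norm_eq_abs, abs_neg, abs_of_pos hs0,
    abs_of_nonneg (mul_nonneg (mul_nonneg (sq_nonneg s) ha0.le) (by linarith : (0:ℝ) ≤ 1 - s))]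
  rw [← ENNReal.ofReal_mul (mul_nonneg (mul_nonneg (sq_nonneg s) ha0.le) (by linarith : (0:ℝ) ≤ 1 - s)), ← ENNReal.ofReal_mul (by nlinarith)]
  congr 1
  rw [one_div, div_eq_mul_inv]
  exact jac_cancel' (ne_of_gt hs0)

end lint


section assembly
variable (u v w : EuclideanSpace ℝ (Fin 3))

lemma meas_R1 : MeasurableSet R1 := by
  unfold R1
  simp only [setOf_and]
  repeat' apply MeasurableSet.inter
  all_goals exact measurableSet_lt (by fun_prop) (by fun_prop)

lemma meas_R2 : MeasurableSet R2 := by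
  unfold R2
  simp only [setOf_and]
  repeat' apply MeasurableSet.inter
  all_goals exact measurableSet_lt (by fun_prop) (by fun_prop)

lemma meas_R3 : MeasurableSet R3 := by
  unfold R3
  simp only [setOf_and]
  repeat' apply MeasurableSet.inter
  all_goals exact measurableSet_lt (by fun_prop) (by fun_prop)

lemma meas_R4 : MeasurableSet R4 := by
  unfold R4
  simp only [setOf_and]
  repeat' apply MeasurableSet.inter
  all_goals exact measurableSet_lt (by fun_prop) (by fun_prop)

lemma meas_R5 : MeasurableSet R5 := by
  unfold R5
  simp only [setOf_and]
  repeat' apply MeasurableSet.inter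
  all_goals exact measurableSet_lt (by fun_prop) (by fun_prop)

lemma null_ker (f : E4 →L[ℝ] ℝ) (x0 : E4) (hx0 : f x0 ≠ 0) :
    volume {P : E4 | f P = 0} = 0 := by
  have hset : {P : E4 | f P = 0} = (LinearMap.ker (f : E4 →ₗ[ℝ] ℝ) : Set E4) := by
    ext P; simp [LinearMap.mem_ker]
  rw [hset]
  refine Measure.addHaar_submodule _ _ ?_
  intro h
  exact hx0 (LinearMap.mem_ker.1 (h ▸ Submodule.mem_top : x0 ∈ LinearMap.ker (f : E4 →ₗ[ℝ] ℝ)))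

lemma null1 : volume {P : E4 | P.1.1 - P.2.1 = 0} = 0 := by
  have : {P : E4 | P.1.1 - P.2.1 = 0} = {P : E4 | (pi1 - pi3) P = 0} := by
    ext P; simp [pi1, pi3]
  rw [this]
  exact null_ker (pi1 - pi3) ((1,0),(0,0)) (by simp [pi1, pi3])

lemma null2 : volume {P : E4 | P.1.2 - (P.2.2 + (P.1.1 - P.2.1)) = 0} = 0 := by
  have : {P : E4 | P.1.2 - (P.2.2 + (P.1.1 - P.2.1)) = 0}
      = {P : E4 | (pi2 - pi4 - pi1 + pi3) P = 0} := by
    ext P; simp [pi1, pi2, pi3, pi4]; constructor <;> intro h <;> linarith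
  rw [this]
  refine null_ker _ ((0,1),(0,0)) (by simp [pi1, pi2, pi3, pi4])

lemma null3 : volume {P : E4 | P.2.2 - (P.2.1 - P.1.1) = 0} = 0 := by
  have : {P : E4 | P.2.2 - (P.2.1 - P.1.1) = 0}
      = {P : E4 | (pi4 - pi3 + pi1) P = 0} := by
    ext P; simp [pi1, pi3, pi4]; constructor <;> intro h <;> linarith
  rw [this]
  refine null_ker _ ((0,0),(0,1)) (by simp [pi1, pi3, pi4])

lemma cover_ae :
    (refTri ×ˢ refTri : Set E4) =ᵐ[volume] ((R1 ∪ (R2 ∪ (R3 ∪ (R4 ∪ R5)))) : Set E4) := by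
  have hsub : (R1 ∪ (R2 ∪ (R3 ∪ (R4 ∪ R5)))) ⊆ (refTri ×ˢ refTri : Set E4) := by
    intro P hP
    have : (0 < P.1.2 ∧ P.1.2 < P.1.1 ∧ P.1.1 < 1) ∧
        (0 < P.2.2 ∧ P.2.2 < P.2.1 ∧ P.2.1 < 1) := by
      rcases hP with h | h | h | h | h
      exacts [⟨h.1, h.2.1⟩, ⟨h.1, h.2.1⟩, ⟨h.1, h.2.1⟩, ⟨h.1, h.2.1⟩, ⟨h.1, h.2.1⟩]
    exact ⟨this.1, this.2⟩
  have hdiff : (refTri ×ˢ refTri : Set E4) \ (R1 ∪ (R2 ∪ (R3 ∪ (R4 ∪ R5))))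
      ⊆ {P : E4 | P.1.1 - P.2.1 = 0} ∪ ({P : E4 | P.1.2 - (P.2.2 + (P.1.1 - P.2.1)) = 0}
        ∪ {P : E4 | P.2.2 - (P.2.1 - P.1.1) = 0}) := by
    rintro P ⟨hS, hn⟩
    obtain ⟨⟨hx20, hx21, hx11⟩, hy20, hy21, hy11⟩ := hS
    by_contra hcon
    simp only [mem_union, mem_setOf_eq, not_or] at hcon
    obtain ⟨e1, e2, e3⟩ := hcon
    apply hn
    rcases lt_or_gt_of_ne (fun h : P.1.1 = P.2.1 => e1 (by linarith)) with h | h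
    · -- x₁ < y₁ : regions 3,4,5
      rcases lt_or_gt_of_ne (fun h2 : P.2.2 = P.2.1 - P.1.1 => e3 (by linarith)) with h2 | h2
      · exact Or.inr (Or.inr (Or.inr (Or.inl ⟨⟨hx20, hx21, hx11⟩, ⟨hy20, hy21, hy11⟩, h, h2⟩)))
      · rcases lt_or_gt_of_ne (fun h3 : P.1.2 = P.2.2 - (P.2.1 - P.1.1) => e2 (by linarith))
          with h3 | h3
        · exact Or.inr (Or.inr (Or.inl ⟨⟨hx20, hx21, hx11⟩, ⟨hy20, hy21, hy11⟩, h, h3⟩))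
        · exact Or.inr (Or.inr (Or.inr (Or.inr
            ⟨⟨hx20, hx21, hx11⟩, ⟨hy20, hy21, hy11⟩, h, h2, h3⟩)))
    · -- y₁ < x₁ : regions 1,2
      rcases lt_or_gt_of_ne (fun h3 : P.1.2 = P.2.2 + (P.1.1 - P.2.1) => e2 (by linarith))
        with h3 | h3
      · exact Or.inl ⟨⟨hx20, hx21, hx11⟩, ⟨hy20, hy21, hy11⟩, h, h3⟩
      · exact Or.inr (Or.inl ⟨⟨hx20, hx21, hx11⟩, ⟨hy20, hy21, hy11⟩, h, h3⟩)
  have hnull : volume ((refTri ×ˢ refTri : Set E4) \ (R1 ∪ (R2 ∪ (R3 ∪ (R4 ∪ R5))))) = 0 :=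
    measure_mono_null hdiff (by
      refine measure_union_null null1 (measure_union_null null2 null3))
  refine MeasureTheory.ae_eq_set.2 ⟨hnull, ?_⟩
  rw [diff_eq_empty.2 hsub]
  simp

lemma disj12 : Disjoint R1 R2 :=
  Set.disjoint_left.2 fun P h1 h2 => by
    have a1 := h1.2.2.2; have a2 := h2.2.2.2; linarith
lemma disj_R1_rest : Disjoint R1 (R2 ∪ (R3 ∪ (R4 ∪ R5))) := by
  refine Set.disjoint_left.2 fun P h1 h2 => ?_
  have a1 := h1.2.2.1
  have a2 := h1.2.2.2
  rcases h2 with h | h | h | h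
  · have := h.2.2.2; linarith
  · have := h.2.2.1; linarith
  · have := h.2.2.1; linarith
  · have := h.2.2.1; linarith
lemma disj_R2_rest : Disjoint R2 (R3 ∪ (R4 ∪ R5)) := by
  refine Set.disjoint_left.2 fun P h1 h2 => ?_
  have a1 := h1.2.2.1
  rcases h2 with h | h | h
  · have := h.2.2.1; linarith
  · have := h.2.2.1; linarith
  · have := h.2.2.1; linarith
lemma disj_R3_rest : Disjoint R3 (R4 ∪ R5) := by
  refine Set.disjoint_left.2 fun P h1 h2 => ?_
  have a1 := h1.2.2.2
  have b1 := h1.1.1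
  rcases h2 with h | h
  · have := h.2.2.2; linarith
  · have := h.2.2.2.2; linarith
lemma disj_R4_R5 : Disjoint R4 R5 := by
  refine Set.disjoint_left.2 fun P h1 h2 => ?_
  have a1 := h1.2.2.2
  have := h2.2.2.2.1
  linarith

lemma factor_Q4 (g : ℝ × ℝ → ENNReal) (hg : Measurable g) :
    ∫⁻ x in Q4, ENNReal.ofReal (x.1.1*(1 - x.1.1)) * g x.2
      = (∫⁻ z in Ioo (0:ℝ) 1 ×ˢ Ioo (0:ℝ) 1, ENNReal.ofReal (z.1*(1 - z.1))) *
        ∫⁻ η in Ioo (0:ℝ) 1 ×ˢ Ioo (0:ℝ) 1, g η := by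
  have hQ : Q4 = (Ioo (0:ℝ) 1 ×ˢ Ioo (0:ℝ) 1) ×ˢ (Ioo (0:ℝ) 1 ×ˢ Ioo (0:ℝ) 1) := rfl
  rw [hQ, Measure.volume_eq_prod, ← Measure.prod_restrict]
  have hf : Measurable fun z : ℝ × ℝ => ENNReal.ofReal (z.1*(1 - z.1)) :=
    ENNReal.measurable_ofReal.comp (by fun_prop)
  exact lintegral_prod_mul hf.aemeasurable hg.aemeasurable

lemma weight_eq :
    ∫⁻ z in Ioo (0:ℝ) 1 ×ˢ Ioo (0:ℝ) 1, ENNReal.ofReal (z.1*(1 - z.1))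
      = ENNReal.ofReal (1/6) := by
  rw [Measure.volume_eq_prod, ← Measure.prod_restrict]
  have hf : Measurable fun s : ℝ => ENNReal.ofReal (s*(1 - s)) :=
    ENNReal.measurable_ofReal.comp (by fun_prop)
  have hkey := lintegral_prod_mul (μ := volume.restrict (Ioo (0:ℝ) 1))
    (ν := volume.restrict (Ioo (0:ℝ) 1)) (f := fun s : ℝ => ENNReal.ofReal (s*(1 - s)))
    (g := fun _ : ℝ => (1:ENNReal)) hf.aemeasurable aemeasurable_const
  simp only [mul_one] at hkey
  rw [hkey, lintegral_one, Measure.restrict_apply_univ, Real.volume_Ioo]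
  have h1d : ∫⁻ s in Ioo (0:ℝ) 1, ENNReal.ofReal (s*(1 - s)) = ENNReal.ofReal (1/6) := by
    have hInt : IntegrableOn (fun s : ℝ => s*(1 - s)) (Ioo 0 1) volume :=
      ((continuous_id.mul (continuous_const.sub continuous_id)).integrableOn_Icc).mono_set
        Ioo_subset_Icc_self
    rw [← ofReal_integral_eq_lintegral_ofReal hInt
      ((ae_restrict_iff' measurableSet_Ioo).2 (ae_of_all _ fun s hs => by obtain ⟨h1, h2⟩ := hs; show (0:ℝ) ≤ s*(1-s); nlinarith))]
    congr 1
    rw [← integral_Ioc_eq_integral_Ioo, ← intervalIntegral.integral_of_le zero_le_one]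
    have heq : ∀ x : ℝ, x*(1 - x) = x - x^2 := fun x => by ring
    simp_rw [heq]
    rw [intervalIntegral.integral_sub intervalIntegral.intervalIntegrable_id
      (intervalIntegral.intervalIntegrable_pow 2)]
    rw [integral_id, integral_pow]
    norm_num
  rw [h1d]
  norm_num

end assembly


section main
variable (u v w : EuclideanSpace ℝ (Fin 3))

lemma meas_g1 : Measurable fun η : ℝ × ℝ => ENNReal.ofReal (1 / ‖η.1 • (u + v) + η.2 • w - u‖) :=
  ENNReal.measurable_ofReal.comp (Measurable.div measurable_const (by fun_prop))
lemma meas_g2 : Measurable fun η : ℝ × ℝ =>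
    ENNReal.ofReal (η.1 / ‖(η.1 * η.2) • (u + v) - η.1 • u + w‖) :=
  ENNReal.measurable_ofReal.comp (Measurable.div (by fun_prop) (by fun_prop))
lemma meas_g3 : Measurable fun η : ℝ × ℝ =>
    ENNReal.ofReal (η.1 / ‖(η.1 * η.2) • (w + v) - η.1 • w + u‖) :=
  ENNReal.measurable_ofReal.comp (Measurable.div (by fun_prop) (by fun_prop))
lemma meas_g4 : Measurable fun η : ℝ × ℝ =>
    ENNReal.ofReal (η.1 / ‖(η.1 * η.2) • u + η.1 • (w + v) - w‖) :=
  ENNReal.measurable_ofReal.comp (Measurable.div (by fun_prop) (by fun_prop))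
lemma meas_g5 : Measurable fun η : ℝ × ℝ =>
    ENNReal.ofReal (η.1 / ‖(η.1 * η.2) • (w + v) + η.1 • u - w‖) :=
  ENNReal.measurable_ofReal.comp (Measurable.div (by fun_prop) (by fun_prop))

lemma main_lint :
    ∫⁻ P in (refTri ×ˢ refTri : Set E4), ENNReal.ofReal (Ksl u v w P)
      = ENNReal.ofReal (1/6) *
        ∫⁻ η in Ioo (0:ℝ) 1 ×ˢ Ioo (0:ℝ) 1, ENNReal.ofReal (core u v w η) := by
  rw [setLIntegral_congr (cover_ae)]
  rw [lintegral_union (meas_R2.union (meas_R3.union (meas_R4.union meas_R5))) disj_R1_rest,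
      lintegral_union (meas_R3.union (meas_R4.union meas_R5)) disj_R2_rest,
      lintegral_union (meas_R4.union meas_R5) disj_R3_rest,
      lintegral_union meas_R5 disj_R4_R5]
  rw [lint_R1 u v w, lint_R2 u v w, lint_R3 u v w, lint_R4 u v w, lint_R5 u v w]
  rw [factor_Q4 _ (meas_g1 u v w), factor_Q4 _ (meas_g2 u v w), factor_Q4 _ (meas_g3 u v w),
      factor_Q4 _ (meas_g4 u v w), factor_Q4 _ (meas_g5 u v w), weight_eq]
  rw [← mul_add, ← mul_add, ← mul_add, ← mul_add]
  congr 1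
  rw [← lintegral_add_left (meas_g4 u v w), ← lintegral_add_left (meas_g3 u v w),
      ← lintegral_add_left (meas_g2 u v w), ← lintegral_add_left (meas_g1 u v w)]
  refine (setLIntegral_congr_fun_ae ((isOpen_Ioo.prod isOpen_Ioo).measurableSet)
    (ae_of_all _ ?_)).symm
  rintro ⟨a, b⟩ hab
  have ha0 : (0:ℝ) ≤ a := le_of_lt hab.1.1
  have h1 : (0:ℝ) ≤ 1 / ‖a • (u + v) + b • w - u‖ := by positivity
  have h2 : (0:ℝ) ≤ a / ‖(a * b) • (u + v) - a • u + w‖ := div_nonneg ha0 (norm_nonneg _)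
  have h3 : (0:ℝ) ≤ a / ‖(a * b) • (w + v) - a • w + u‖ := div_nonneg ha0 (norm_nonneg _)
  have h4 : (0:ℝ) ≤ a / ‖(a * b) • u + a • (w + v) - w‖ := div_nonneg ha0 (norm_nonneg _)
  have h5 : (0:ℝ) ≤ a / ‖(a * b) • (w + v) + a • u - w‖ := div_nonneg ha0 (norm_nonneg _)
  show ENNReal.ofReal (core u v w (a, b)) = _
  unfold core
  rw [ENNReal.ofReal_add (by linarith) h5, ENNReal.ofReal_add (by linarith) h4,
      ENNReal.ofReal_add (by linarith) h3, ENNReal.ofReal_add h1 h2]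
  ring

end main


/-- Reduction of the single layer potential integral for a pair of triangles
sharing exactly a common edge to a two-dimensional integral; both sides are
finite. -/
theorem slp_common_edge (p u v w : EuclideanSpace ℝ (Fin 3))
    (hvu : LinearIndependent ℝ ![v, u]) (hvw : LinearIndependent ℝ ![v, w])
    (hinter : closedTri p v u ∩ closedTri p v w
      = {z | ∃ t : ℝ, 0 ≤ t ∧ t ≤ 1 ∧ z = p + t • v}) :
    IntegrableOn
        (fun P : (ℝ × ℝ) × (ℝ × ℝ) =>
          1 / ‖(P.1.1 - P.2.1) • v + P.1.2 • w - P.2.2 • u‖)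
        (refTri ×ˢ refTri) volume ∧
    IntegrableOn
        (fun η : ℝ × ℝ =>
          1 / ‖η.1 • (u + v) + η.2 • w - u‖
            + η.1 / ‖(η.1 * η.2) • (u + v) - η.1 • u + w‖
            + η.1 / ‖(η.1 * η.2) • (w + v) - η.1 • w + u‖
            + η.1 / ‖(η.1 * η.2) • u + η.1 • (w + v) - w‖
            + η.1 / ‖(η.1 * η.2) • (w + v) + η.1 • u - w‖)
        ((Ioo (0:ℝ) 1) ×ˢ (Ioo (0:ℝ) 1)) volume ∧
    ∫ P in refTri ×ˢ refTri,
        1 / ‖(P.1.1 - P.2.1) • v + P.1.2 • w - P.2.2 • u‖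
      = (1/6) * ∫ η in (Ioo (0:ℝ) 1) ×ˢ (Ioo (0:ℝ) 1),
          (1 / ‖η.1 • (u + v) + η.2 • w - u‖
            + η.1 / ‖(η.1 * η.2) • (u + v) - η.1 • u + w‖
            + η.1 / ‖(η.1 * η.2) • (w + v) - η.1 • w + u‖
            + η.1 / ‖(η.1 * η.2) • u + η.1 • (w + v) - w‖
            + η.1 / ‖(η.1 * η.2) • (w + v) + η.1 • u - w‖) := by
  -- geometric dichotomy and denominator bounds
  have hd := slp_dichotomy hvu hvw hinter
  obtain ⟨C, hC0, hCb⟩ := core_bdd (u := u) (v := v) (w := w)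
    (fun {a b} ha0 ha1 hb0 hb1 => den1 hvu hd ha0 ha1 hb0 hb1)
    (fun {a b} ha0 ha1 hb0 hb1 => den2 hvu hd ha0 ha1 hb0 hb1)
    (fun {a b} ha0 ha1 hb0 hb1 => den3 hvu hd ha0 ha1 hb0 hb1)
    (fun {a b} ha0 ha1 hb0 hb1 => den4 hvu hd ha0 ha1 hb0 hb1)
    (fun {a b} ha0 ha1 hb0 hb1 => den5 hvu hd ha0 ha1 hb0 hb1)
  set sq : Set (ℝ × ℝ) := (Ioo (0:ℝ) 1) ×ˢ (Ioo (0:ℝ) 1) with hsq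
  have meas_sq : MeasurableSet sq := (isOpen_Ioo.prod isOpen_Ioo).measurableSet
  set B := ∫⁻ η in sq, ENNReal.ofReal (core u v w η) with hB
  -- B is finite
  have hBle : B ≤ ENNReal.ofReal C * volume sq := by
    rw [hB, ← setLIntegral_const sq (ENNReal.ofReal C)]
    refine setLIntegral_mono measurable_const ?_
    intro η hη
    refine ENNReal.ofReal_le_ofReal (hCb η ⟨⟨le_of_lt hη.1.1, le_of_lt hη.1.2⟩,
      ⟨le_of_lt hη.2.1, le_of_lt hη.2.2⟩⟩)
  have hvolsq : volume sq = 1 := by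
    rw [hsq, Measure.volume_eq_prod, Measure.prod_prod, Real.volume_Ioo]
    norm_num
  have hBfin : B < ⊤ := lt_of_le_of_lt hBle (by
    rw [hvolsq, mul_one]; exact ENNReal.ofReal_lt_top)
  -- main identity
  have hmain := main_lint u v w
  -- measurability facts
  have hKm : Measurable (Ksl u v w) :=
    Measurable.div measurable_const (by fun_prop)
  have hcm : Measurable (core u v w) := core_measurable u v w
  -- nonnegativity
  have hKnn : 0 ≤ᵐ[volume.restrict (refTri ×ˢ refTri : Set E4)] Ksl u v w :=
    ae_of_all _ fun P => by unfold Ksl; positivity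
  have hcnn : 0 ≤ᵐ[volume.restrict sq] core u v w := by
    refine (ae_restrict_iff' meas_sq).2 (ae_of_all _ fun η hη => ?_)
    exact core_nonneg u v w (le_of_lt hη.1.1)
  -- Bochner integrals via lintegrals
  have hint1 : ∫ P in (refTri ×ˢ refTri : Set E4), Ksl u v w P
      = (∫⁻ P in (refTri ×ˢ refTri : Set E4), ENNReal.ofReal (Ksl u v w P)).toReal :=
    integral_eq_lintegral_of_nonneg_ae hKnn hKm.aestronglyMeasurable.restrict
  have hint2 : ∫ η in sq, core u v w η
      = (∫⁻ η in sq, ENNReal.ofReal (core u v w η)).toReal :=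
    integral_eq_lintegral_of_nonneg_ae hcnn hcm.aestronglyMeasurable.restrict
  have hAfin : (∫⁻ P in (refTri ×ˢ refTri : Set E4), ENNReal.ofReal (Ksl u v w P)) < ⊤ := by
    rw [hmain]
    exact ENNReal.mul_lt_top ENNReal.ofReal_lt_top hBfin
  refine ⟨?_, ?_, ?_⟩
  · exact ⟨hKm.aestronglyMeasurable.restrict,
      (hasFiniteIntegral_iff_ofReal hKnn).2 hAfin⟩
  · exact ⟨hcm.aestronglyMeasurable.restrict,
      (hasFiniteIntegral_iff_ofReal hcnn).2 hBfin⟩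
  · show ∫ P in (refTri ×ˢ refTri : Set E4), Ksl u v w P
      = (1/6) * ∫ η in sq, core u v w η
    rw [hint1, hint2, hmain, ENNReal.toReal_mul, ENNReal.toReal_ofReal (by norm_num)]
end
end

section
/- Let a, b, c ∈ ℝ³ be such that (η a + b) × c ≠ 0 for every η ∈ [0,1] (in particular c ≠ 0). Then ∫₀¹ ∫₀¹ 1/|η a + b − s c| ds dη = (1/|c|) ∫₀¹ ln( ( |η a + b| |c| + (η a + b)·c ) / ( |η a + b − c| |c| + (η a + b − c)·c ) ) dη, where all the quantities inside the logarithm are strictly positive. -/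
open MeasureTheory Set
open scoped RealInnerProductSpace

/-- The cross product on `ℝ³` (as `EuclideanSpace ℝ (Fin 3)`). -/
noncomputable def cross3 (a b : EuclideanSpace ℝ (Fin 3)) : EuclideanSpace ℝ (Fin 3) :=
  (WithLp.equiv 2 (Fin 3 → ℝ)).symm
    ![a 1 * b 2 - a 2 * b 1, a 2 * b 0 - a 0 * b 2, a 0 * b 1 - a 1 * b 0]

lemma cross3_apply (a b : EuclideanSpace ℝ (Fin 3)) (i : Fin 3) :
    cross3 a b i = ![a 1 * b 2 - a 2 * b 1, a 2 * b 0 - a 0 * b 2, a 0 * b 1 - a 1 * b 0] i := rfl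

lemma lagrange (x y : EuclideanSpace ℝ (Fin 3)) :
    ⟪cross3 x y, cross3 x y⟫ = ‖x‖^2 * ‖y‖^2 - ⟪x,y⟫^2 := by
  rw [← real_inner_self_eq_norm_sq, ← real_inner_self_eq_norm_sq]
  simp only [PiLp.inner_apply, RCLike.inner_apply, conj_trivial, Fin.sum_univ_three, cross3_apply]
  simp [Matrix.cons_val_zero, Matrix.cons_val_one]
  ring

lemma cross3_sub (x y : EuclideanSpace ℝ (Fin 3)) : cross3 (x - y) y = cross3 x y := by
  ext i
  simp only [cross3]
  have : ∀ j : Fin 3, (x - y) j = x j - y j := fun j => rfl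
  fin_cases i <;> simp [this] <;> ring

lemma Qpos (A B C : ℝ) (hA : 0 < A) (hD : B^2 < A*C) (s : ℝ) :
    0 < A*s^2 - 2*B*s + C := by nlinarith [sq_nonneg (A*s - B)]

lemma gpos (A B C : ℝ) (hA : 0 < A) (hD : B^2 < A*C) (s : ℝ) :
    0 < Real.sqrt A * Real.sqrt (A*s^2 - 2*B*s + C) + (A*s - B) := by
  have hQ := Qpos A B C hA hD s
  have h1 : (Real.sqrt A * Real.sqrt (A*s^2 - 2*B*s + C))^2 = A * (A*s^2 - 2*B*s + C) := by
    rw [mul_pow, Real.sq_sqrt hA.le, Real.sq_sqrt hQ.le]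
  have h2 : 0 ≤ Real.sqrt A * Real.sqrt (A*s^2 - 2*B*s + C) :=
    mul_nonneg (Real.sqrt_nonneg _) (Real.sqrt_nonneg _)
  nlinarith [h1, h2, sq_nonneg (A*s - B)]

lemma calc_aux (A B C : ℝ) (hA : 0 < A) (hD : B^2 < A*C) :
    ∫ s in (0:ℝ)..1, (Real.sqrt (A*s^2 - 2*B*s + C))⁻¹
      = (Real.sqrt A)⁻¹ *
        (Real.log (Real.sqrt A * Real.sqrt (A - 2*B + C) + (A - B))
         - Real.log (Real.sqrt A * Real.sqrt C - B)) := by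
  have hsA : 0 < Real.sqrt A := Real.sqrt_pos.mpr hA
  set F : ℝ → ℝ := fun s =>
    (Real.sqrt A)⁻¹ * Real.log (Real.sqrt A * Real.sqrt (A*s^2 - 2*B*s + C) + (A*s - B)) with hF
  have hderiv : ∀ s ∈ uIcc (0:ℝ) 1, HasDerivAt F (Real.sqrt (A*s^2 - 2*B*s + C))⁻¹ s := by
    intro s _
    have hQ := Qpos A B C hA hD s
    have hsQ : 0 < Real.sqrt (A*s^2 - 2*B*s + C) := Real.sqrt_pos.mpr hQ
    have hg := gpos A B C hA hD s
    have h1 : HasDerivAt (fun s : ℝ => A*s^2 - 2*B*s + C) (2*A*s - 2*B) s := by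
      have := (((hasDerivAt_pow 2 s).const_mul A).sub ((hasDerivAt_id s).const_mul (2*B))).add_const C
      exact this.congr_deriv (by simp; ring)
    have h2 : HasDerivAt (fun s : ℝ => Real.sqrt (A*s^2 - 2*B*s + C))
        ((2*A*s - 2*B)/(2*Real.sqrt (A*s^2 - 2*B*s + C))) s := h1.sqrt hQ.ne'
    have h3 : HasDerivAt (fun s : ℝ => Real.sqrt A * Real.sqrt (A*s^2 - 2*B*s + C) + (A*s - B))
        (Real.sqrt A * ((2*A*s - 2*B)/(2*Real.sqrt (A*s^2 - 2*B*s + C))) + A) s := by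
      have := (h2.const_mul (Real.sqrt A)).add (((hasDerivAt_id s).const_mul A).sub_const B)
      exact this.congr_deriv (by ring)
    have h4 := (h3.log hg.ne').const_mul (Real.sqrt A)⁻¹
    refine h4.congr_deriv ?_
    have hAA : Real.sqrt A * Real.sqrt A = A := Real.mul_self_sqrt hA.le
    have hQQ : Real.sqrt (A*s^2 - 2*B*s + C) * Real.sqrt (A*s^2 - 2*B*s + C)
        = A*s^2 - 2*B*s + C := Real.mul_self_sqrt hQ.le
    generalize √(A*s^2 - 2*B*s + C) = q at hQQ hsQ hg ⊢
    field_simp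
    nlinarith [hAA, hQQ, hsA, hsQ, hg]
  have hcont : ContinuousOn (fun s : ℝ => (Real.sqrt (A*s^2 - 2*B*s + C))⁻¹) (uIcc (0:ℝ) 1) := by
    apply Continuous.continuousOn
    exact (Real.continuous_sqrt.comp (by continuity)).inv₀
      (fun s => (Real.sqrt_pos.mpr (Qpos A B C hA hD s)).ne')
  have := intervalIntegral.integral_eq_sub_of_hasDerivAt hderiv (hcont.intervalIntegrable)
  rw [this, hF]
  simp only
  rw [← mul_sub]
  norm_num
  left; ring_nf

lemma pos_aux (x y : EuclideanSpace ℝ (Fin 3)) (h : cross3 x y ≠ 0) :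
    0 < ‖x‖ * ‖y‖ + ⟪x,y⟫ ∧ 0 < ‖x‖ * ‖y‖ - ⟪x,y⟫ := by
  have h0 : 0 < ⟪cross3 x y, cross3 x y⟫ := by
    rw [real_inner_self_eq_norm_sq]; exact pow_pos (norm_pos_iff.mpr h) 2
  rw [lagrange] at h0
  have h1 : (‖x‖ * ‖y‖)^2 = ‖x‖^2 * ‖y‖^2 := by ring
  have h2 : 0 ≤ ‖x‖ * ‖y‖ := mul_nonneg (norm_nonneg _) (norm_nonneg _)
  constructor <;> nlinarith [h0, h1, h2]

lemma norm_eq_sqrt (x y : EuclideanSpace ℝ (Fin 3)) (s : ℝ) :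
    ‖x - s • y‖ = Real.sqrt (‖y‖^2 * s^2 - 2 * ⟪x,y⟫ * s + ‖x‖^2) := by
  have : ‖y‖^2 * s^2 - 2 * ⟪x,y⟫ * s + ‖x‖^2 = ‖x - s • y‖^2 := by
    rw [norm_sub_sq_real, real_inner_smul_right, norm_smul]
    simp [mul_pow]
    ring
  rw [this, Real.sqrt_sq (norm_nonneg _)]

lemma inner_int (x y : EuclideanSpace ℝ (Fin 3)) (h : cross3 x y ≠ 0) :
    ∫ s in Ioo (0:ℝ) 1, 1 / ‖x - s • y‖
      = (1 / ‖y‖) * Real.log ((‖x‖ * ‖y‖ + ⟪x,y⟫) / (‖x - y‖ * ‖y‖ + ⟪x - y,y⟫)) := by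
  set A := ‖y‖^2 with hA'
  set B := ⟪x,y⟫ with hB'
  set C := ‖x‖^2 with hC'
  have hlag : 0 < C * A - B^2 := by
    have h0 : 0 < ⟪cross3 x y, cross3 x y⟫ := by
      rw [real_inner_self_eq_norm_sq]; exact pow_pos (norm_pos_iff.mpr h) 2
    rw [lagrange] at h0
    rw [hC', hA', hB']; linarith
  have hA : 0 < A := by
    rcases lt_or_eq_of_le (sq_nonneg ‖y‖) with h' | h'
    · exact h'
    · exfalso; nlinarith
  have hD : B^2 < A * C := by linarith
  have hy : 0 < ‖y‖ := by
    have := hA; rw [hA'] at this; nlinarith [norm_nonneg y]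
  have hsA : Real.sqrt A = ‖y‖ := Real.sqrt_sq hy.le
  -- convert Ioo integral to interval integral
  have hIoo : ∫ s in Ioo (0:ℝ) 1, 1 / ‖x - s • y‖
      = ∫ s in (0:ℝ)..1, (Real.sqrt (A*s^2 - 2*B*s + C))⁻¹ := by
    rw [intervalIntegral.integral_of_le zero_le_one, ← integral_Ioc_eq_integral_Ioo]
    refine setIntegral_congr_fun measurableSet_Ioc (fun s _ => ?_)
    rw [one_div, norm_eq_sqrt]
  rw [hIoo, calc_aux A B C hA hD]
  -- endpoint values
  have e1 : Real.sqrt (A - 2*B + C) = ‖x - y‖ := by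
    have := norm_eq_sqrt x y 1
    simp only [one_smul] at this
    rw [this, hA', hB', hC']; ring_nf
  have e0 : Real.sqrt C = ‖x‖ := Real.sqrt_sq (norm_nonneg _)
  rw [e1, e0, hsA]
  -- log algebra
  have hxy2 : ‖x - y‖^2 = A - 2*B + C := by
    have := norm_eq_sqrt x y 1
    simp only [one_smul] at this
    rw [this, Real.sq_sqrt (by nlinarith [sq_nonneg (A - B)] : (0:ℝ) ≤ A*1^2 - 2*B*1 + C)]
    ring
  have hsub : ⟪x - y, y⟫ = B - A := by
    rw [inner_sub_left, hA', real_inner_self_eq_norm_sq]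
  have hpos2 := pos_aux (x - y) y (by rw [cross3_sub]; exact h)
  have hpos1 := pos_aux x y h
  have hx1 : 0 < ‖y‖ * ‖x - y‖ + (A - B) := by
    have := hpos2.2; rw [hsub] at this; linarith [this]
  have hx0 : 0 < ‖y‖ * ‖x‖ - B := by
    have := hpos1.2; linarith [this]
  have hy0 : 0 < ‖x‖ * ‖y‖ + B := hpos1.1
  have hy1 : 0 < ‖x - y‖ * ‖y‖ + (B - A) := by
    have := hpos2.1; rw [hsub] at this; linarith [this]
  have key : ‖y‖ * ‖x - y‖ + (A - B) = (‖y‖ * ‖x‖ - B) * (‖x‖ * ‖y‖ + B) / (‖x - y‖ * ‖y‖ + (B - A)) := by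
    rw [eq_div_iff hy1.ne']
    have hyy : ‖y‖^2 = A := rfl
    nlinarith [hxy2, hyy]
  rw [hsub, key, Real.log_div (by positivity) hy1.ne', Real.log_mul hx0.ne' hy0.ne',
      Real.log_div hy0.ne' hy1.ne']
  rw [one_div, ← hsA]
  ring

/-- If `(η a + b) × c ≠ 0` for all `η ∈ [0,1]`, then the inner integral over
`s` of the single layer kernel can be carried out analytically, all the
quantities inside the logarithm being strictly positive. -/
theorem slp_inner_integration (a b c : EuclideanSpace ℝ (Fin 3))
    (h : ∀ η ∈ Icc (0:ℝ) 1, cross3 (η • a + b) c ≠ 0) :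
    (∀ η ∈ Icc (0:ℝ) 1,
      0 < ‖η • a + b‖ * ‖c‖ + ⟪η • a + b, c⟫ ∧
      0 < ‖η • a + b - c‖ * ‖c‖ + ⟪η • a + b - c, c⟫) ∧
    ∫ η in Ioo (0:ℝ) 1, (∫ s in Ioo (0:ℝ) 1, 1 / ‖η • a + b - s • c‖)
      = (1 / ‖c‖) * ∫ η in Ioo (0:ℝ) 1,
          Real.log ((‖η • a + b‖ * ‖c‖ + ⟪η • a + b, c⟫)
            / (‖η • a + b - c‖ * ‖c‖ + ⟪η • a + b - c, c⟫)) := by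

  constructor
  · intro η hη
    exact ⟨(pos_aux _ c (h η hη)).1,
      (pos_aux _ c (by rw [cross3_sub]; exact h η hη)).1⟩
  · rw [← MeasureTheory.integral_const_mul]
    refine setIntegral_congr_fun measurableSet_Ioo (fun η hη => ?_)
    exact inner_int (η • a + b) c (h η (Ioo_subset_Icc_self hη))
end

section
/- Let a, b, c ∈ ℝ³ be such that (η a + b) × c ≠ 0 for every η ∈ [0,1], and set ĉ = c/|c|. Define h₀(η) = ( (η a + b)·b + |η a + b| (b·ĉ) ) / ( |η a + b|² + |η a + b| ((η a + b)·ĉ) ) and h₁(η) = ( (η a + b − c)·(b − c) + |η a + b − c| ((b−c)·ĉ) ) / ( |η a + b − c|² + |η a + b − c| ((η a + b − c)·ĉ) ). Then integration by parts gives ∫₀¹ ln( ( |η a + b| |c| + (η a + b)·c ) / ( |η a + b − c| |c| + (η a + b − c)·c ) ) dη = ln( ( |a + b| |c| + (a + b)·c ) / ( |a + b − c| |c| + (a + b − c)·c ) ) − ∫₀¹ ( h₁(η) − h₀(η) ) dη. -/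
open MeasureTheory Set
open scoped RealInnerProductSpace

lemma slp_sq_lt_of_cross (v c : EuclideanSpace ℝ (Fin 3)) (h : cross3 v c ≠ 0) :
    ⟪v,c⟫^2 < (‖v‖*‖c‖)^2 := by
  have key : ⟪v,v⟫*⟪c,c⟫ - ⟪v,c⟫^2 = (v 1*c 2 - v 2*c 1)^2 + (v 2*c 0 - v 0*c 2)^2
      + (v 0*c 1 - v 1*c 0)^2 := by
    rw [PiLp.inner_apply, PiLp.inner_apply, PiLp.inner_apply]
    simp [PiLp.inner_apply, Fin.sum_univ_three, RCLike.inner_apply]; ring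
  have hc : ¬ ((v 1*c 2 - v 2*c 1) = 0 ∧ (v 2*c 0 - v 0*c 2) = 0 ∧ (v 0*c 1 - v 1*c 0) = 0) := by
    intro ⟨h1, h2, h3⟩
    exact h (by ext i; fin_cases i <;> simp [cross3, h1, h2, h3])
  have hpos : 0 < (v 1*c 2 - v 2*c 1)^2 + (v 2*c 0 - v 0*c 2)^2 + (v 0*c 1 - v 1*c 0)^2 := by
    rcases not_and_or.mp hc with h1 | h23
    · positivity
    rcases not_and_or.mp h23 with h2 | h3
    · positivity
    · positivity
  have h1 := real_inner_self_eq_norm_mul_norm v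
  have h2 := real_inner_self_eq_norm_mul_norm c
  nlinarith [key, hpos]

lemma slp_pos_of_cross (v c : EuclideanSpace ℝ (Fin 3)) (h : cross3 v c ≠ 0) :
    0 < ‖v‖*‖c‖ + ⟪v,c⟫ := by
  have := slp_sq_lt_of_cross v c h
  nlinarith [mul_nonneg (norm_nonneg v) (norm_nonneg c)]

lemma slp_ne_zero (v c : EuclideanSpace ℝ (Fin 3)) (h : cross3 v c ≠ 0) : c ≠ 0 ∧ v ≠ 0 := by
  constructor <;> rintro rfl <;> apply h <;> ext i <;> fin_cases i <;> simp [cross3]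

lemma slp_cross_sub (v c : EuclideanSpace ℝ (Fin 3)) : cross3 (v - c) c = cross3 v c := by
  ext i; fin_cases i <;> simp [cross3] <;> ring

lemma slp_hasDerivAt_norm_line (a b : EuclideanSpace ℝ (Fin 3)) (η : ℝ) (hne : η • a + b ≠ 0) :
    HasDerivAt (fun t : ℝ => ‖t • a + b‖) (⟪η • a + b, a⟫ / ‖η • a + b‖) η := by
  have hv : HasDerivAt (fun t : ℝ => t • a + b) a η := by
    simpa using ((hasDerivAt_id η).smul_const a).add_const b
  have hin : HasDerivAt (fun t : ℝ => ⟪t • a + b, t • a + b⟫)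
      (⟪η • a + b, a⟫ + ⟪a, η • a + b⟫) η := HasDerivAt.inner ℝ hv hv
  have hx : ⟪η • a + b, η • a + b⟫ ≠ 0 := by
    simpa using (inner_self_ne_zero (𝕜 := ℝ)).mpr hne
  have hsq := (Real.hasDerivAt_sqrt hx).comp η hin
  have heq : ((fun x => Real.sqrt x) ∘ fun t : ℝ => ⟪t • a + b, t • a + b⟫)
      = fun t : ℝ => ‖t • a + b‖ := by
    funext t
    simp only [Function.comp]
    rw [real_inner_self_eq_norm_mul_norm, Real.sqrt_mul_self (norm_nonneg _)]
  rw [heq] at hsq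
  refine hsq.congr_deriv ?_
  rw [real_inner_self_eq_norm_mul_norm, Real.sqrt_mul_self (norm_nonneg _),
    real_inner_comm a (η • a + b)]
  have : ‖η • a + b‖ ≠ 0 := norm_ne_zero_iff.mpr hne
  field_simp
  ring

lemma slp_hasDerivAt_logG (a b c : EuclideanSpace ℝ (Fin 3)) (η : ℝ)
    (h : cross3 (η • a + b) c ≠ 0) :
    HasDerivAt (fun t : ℝ => Real.log (‖t • a + b‖ * ‖c‖ + ⟪t • a + b, c⟫))
      ((⟪η • a + b, a⟫ / ‖η • a + b‖ * ‖c‖ + ⟪a, c⟫)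
        / (‖η • a + b‖ * ‖c‖ + ⟪η • a + b, c⟫)) η := by
  have hne : η • a + b ≠ 0 := (slp_ne_zero _ _ h).2
  have hv : HasDerivAt (fun t : ℝ => t • a + b) a η := by
    simpa using ((hasDerivAt_id η).smul_const a).add_const b
  have hin : HasDerivAt (fun t : ℝ => ⟪t • a + b, c⟫) ⟪a, c⟫ η := by
    simpa using HasDerivAt.inner ℝ hv (hasDerivAt_const η c)
  have hG : HasDerivAt (fun t : ℝ => ‖t • a + b‖ * ‖c‖ + ⟪t • a + b, c⟫)
      (⟪η • a + b, a⟫ / ‖η • a + b‖ * ‖c‖ + ⟪a, c⟫) η :=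
    ((slp_hasDerivAt_norm_line a b η hne).mul_const ‖c‖).add hin
  have hG0 : ‖η • a + b‖ * ‖c‖ + ⟪η • a + b, c⟫ ≠ 0 := (slp_pos_of_cross _ _ h).ne'
  simpa [div_eq_inv_mul, mul_comm, Function.comp_def] using (Real.hasDerivAt_log hG0).comp η hG

lemma slp_real_alg (η n k p vb bc va ac : ℝ) (hn : 0 < n) (hk : 0 < k) (hD : 0 < n*k + p)
    (h1 : η*va = n^2 - vb) (h2 : η*ac = p - bc) :
    η * ((va/n*k + ac)/(n*k + p)) = 1 - (vb + n*(k⁻¹*bc))/(n^2 + n*(k⁻¹*p)) := by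
  have hDeq : n^2 + n*(k⁻¹*p) = (n/k)*(n*k+p) := by field_simp
  have hD2 : n^2 + n*(k⁻¹*p) ≠ 0 := by rw [hDeq]; positivity
  have e1 : η*(va/n*k + ac) = (n^2-vb)/n*k + (p-bc) := by
    field_simp
    linear_combination k*h1 + n*h2
  rw [← mul_div_assoc, e1, hDeq]
  field_simp
  ring

lemma slp_key_alg (a b c : EuclideanSpace ℝ (Fin 3)) (η : ℝ)
    (h : cross3 (η • a + b) c ≠ 0) :
    η * ((⟪η • a + b, a⟫ / ‖η • a + b‖ * ‖c‖ + ⟪a, c⟫)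
        / (‖η • a + b‖ * ‖c‖ + ⟪η • a + b, c⟫))
    = 1 - (⟪η • a + b, b⟫ + ‖η • a + b‖ * ⟪b, ‖c‖⁻¹ • c⟫)
        / (‖η • a + b‖ ^ 2 + ‖η • a + b‖ * ⟪η • a + b, ‖c‖⁻¹ • c⟫) := by
  have hne : η • a + b ≠ 0 := (slp_ne_zero _ _ h).2
  have hc : c ≠ 0 := (slp_ne_zero _ _ h).1
  have hn : 0 < ‖η • a + b‖ := norm_pos_iff.mpr hne
  have hk : 0 < ‖c‖ := norm_pos_iff.mpr hc
  have hD : 0 < ‖η • a + b‖ * ‖c‖ + ⟪η • a + b, c⟫ := slp_pos_of_cross _ _ h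
  have e1 : ⟪b, ‖c‖⁻¹ • c⟫ = ‖c‖⁻¹ * ⟪b, c⟫ := real_inner_smul_right b c ‖c‖⁻¹
  have e2 : ⟪η • a + b, ‖c‖⁻¹ • c⟫ = ‖c‖⁻¹ * ⟪η • a + b, c⟫ :=
    real_inner_smul_right _ c ‖c‖⁻¹
  rw [e1, e2]
  apply slp_real_alg η _ _ _ _ _ _ _ hn hk hD
  · calc η * ⟪η • a + b, a⟫ = ⟪η • a + b, η • a⟫ := (real_inner_smul_right _ a η).symm
      _ = ⟪η • a + b, η • a + b⟫ - ⟪η • a + b, b⟫ := by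
            rw [inner_add_right (𝕜 := ℝ) (η • a + b) (η • a) b]; ring
      _ = ‖η • a + b‖^2 - ⟪η • a + b, b⟫ := by rw [real_inner_self_eq_norm_sq]
  · calc η * ⟪a, c⟫ = ⟪η • a, c⟫ := (real_inner_smul_left a c η).symm
      _ = ⟪η • a + b, c⟫ - ⟪b, c⟫ := by
            rw [inner_add_left (𝕜 := ℝ) (η • a) b c]; ring

/-- Integration by parts for the logarithmic integrand arising in the common
edge case, with `ĉ = c/|c|` and the functions `h₀, h₁` as in the paper. -/
theorem slp_integration_by_parts (a b c : EuclideanSpace ℝ (Fin 3))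
    (h : ∀ η ∈ Icc (0:ℝ) 1, cross3 (η • a + b) c ≠ 0) :
    ∫ η in Ioo (0:ℝ) 1,
        Real.log ((‖η • a + b‖ * ‖c‖ + ⟪η • a + b, c⟫)
          / (‖η • a + b - c‖ * ‖c‖ + ⟪η • a + b - c, c⟫))
      = Real.log ((‖a + b‖ * ‖c‖ + ⟪a + b, c⟫)
          / (‖a + b - c‖ * ‖c‖ + ⟪a + b - c, c⟫))
        - ∫ η in Ioo (0:ℝ) 1,
            ((⟪η • a + b - c, b - c⟫ + ‖η • a + b - c‖ * ⟪b - c, ‖c‖⁻¹ • c⟫)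
                / (‖η • a + b - c‖ ^ 2
                    + ‖η • a + b - c‖ * ⟪η • a + b - c, ‖c‖⁻¹ • c⟫)
              - (⟪η • a + b, b⟫ + ‖η • a + b‖ * ⟪b, ‖c‖⁻¹ • c⟫)
                / (‖η • a + b‖ ^ 2
                    + ‖η • a + b‖ * ⟪η • a + b, ‖c‖⁻¹ • c⟫)) := by
  -- hypotheses for the shifted (by c) line
  have h' : ∀ η ∈ Icc (0:ℝ) 1, cross3 (η • a + (b - c)) c ≠ 0 := by
    intro η hη
    have : η • a + (b - c) = (η • a + b) - c := by abel
    rw [this, slp_cross_sub]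
    exact h η hη
  have hsub : ∀ η : ℝ, η • a + (b - c) = η • a + b - c := fun η => by abel
  -- the functions F and F'
  set F : ℝ → ℝ := fun η => Real.log (‖η • a + b‖ * ‖c‖ + ⟪η • a + b, c⟫)
      - Real.log (‖η • a + (b - c)‖ * ‖c‖ + ⟪η • a + (b - c), c⟫) with hF_def
  set F' : ℝ → ℝ := fun η =>
      (⟪η • a + b, a⟫ / ‖η • a + b‖ * ‖c‖ + ⟪a, c⟫)
        / (‖η • a + b‖ * ‖c‖ + ⟪η • a + b, c⟫)
      - (⟪η • a + (b - c), a⟫ / ‖η • a + (b - c)‖ * ‖c‖ + ⟪a, c⟫)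
        / (‖η • a + (b - c)‖ * ‖c‖ + ⟪η • a + (b - c), c⟫) with hF'_def
  have hF : ∀ x ∈ uIcc (0:ℝ) 1, HasDerivAt F (F' x) x := by
    intro x hx
    rw [uIcc_of_le (by norm_num : (0:ℝ) ≤ 1)] at hx
    exact (slp_hasDerivAt_logG a b c x (h x hx)).sub
      (slp_hasDerivAt_logG a (b - c) c x (h' x hx))
  have hid : ∀ x ∈ uIcc (0:ℝ) 1, HasDerivAt (fun y : ℝ => y) (1:ℝ) x :=
    fun x _ => hasDerivAt_id x
  -- continuity of F' on [0,1]
  have hcont : ContinuousOn F' (Icc (0:ℝ) 1) := by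
    have hline : Continuous (fun t : ℝ => t • a + b) :=
      (continuous_id.smul continuous_const).add continuous_const
    have hline' : Continuous (fun t : ℝ => t • a + (b - c)) :=
      (continuous_id.smul continuous_const).add continuous_const
    have c1 : Continuous (fun t : ℝ => ⟪t • a + b, a⟫) :=
      Continuous.inner hline continuous_const
    have c2 : Continuous (fun t : ℝ => ‖t • a + b‖) := hline.norm
    have c3 : Continuous (fun t : ℝ => ⟪t • a + b, c⟫) :=
      Continuous.inner hline continuous_const
    have c1' : Continuous (fun t : ℝ => ⟪t • a + (b - c), a⟫) :=
      Continuous.inner hline' continuous_const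
    have c2' : Continuous (fun t : ℝ => ‖t • a + (b - c)‖) := hline'.norm
    have c3' : Continuous (fun t : ℝ => ⟪t • a + (b - c), c⟫) :=
      Continuous.inner hline' continuous_const
    apply ContinuousOn.sub
    · apply ContinuousOn.div
      · exact (((c1.continuousOn.div c2.continuousOn
          (fun x hx => (norm_ne_zero_iff.mpr ((slp_ne_zero _ _ (h x hx)).2)))).mul
            continuousOn_const).add continuousOn_const)
      · exact (c2.continuousOn.mul continuousOn_const).add c3.continuousOn
      · exact fun x hx => (slp_pos_of_cross _ _ (h x hx)).ne'
    · apply ContinuousOn.div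
      · exact (((c1'.continuousOn.div c2'.continuousOn
          (fun x hx => (norm_ne_zero_iff.mpr ((slp_ne_zero _ _ (h' x hx)).2)))).mul
            continuousOn_const).add continuousOn_const)
      · exact (c2'.continuousOn.mul continuousOn_const).add c3'.continuousOn
      · exact fun x hx => (slp_pos_of_cross _ _ (h' x hx)).ne'
  have hint : IntervalIntegrable F' volume 0 1 := by
    apply ContinuousOn.intervalIntegrable
    rwa [uIcc_of_le (by norm_num : (0:ℝ) ≤ 1)]
  have hint1 : IntervalIntegrable (fun _ : ℝ => (1:ℝ)) volume 0 1 :=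
    intervalIntegrable_const
  have ibp := intervalIntegral.integral_mul_deriv_eq_deriv_mul hF hid hint hint1
  simp only [mul_one, mul_zero, sub_zero] at ibp
  -- rewrite LHS integral
  have lhs_eq : ∫ η in Ioo (0:ℝ) 1,
      Real.log ((‖η • a + b‖ * ‖c‖ + ⟪η • a + b, c⟫)
        / (‖η • a + b - c‖ * ‖c‖ + ⟪η • a + b - c, c⟫)) = ∫ η in Ioo (0:ℝ) 1, F η := by
    apply setIntegral_congr_fun measurableSet_Ioo
    intro x hx
    have hx' : x ∈ Icc (0:ℝ) 1 := Ioo_subset_Icc_self hx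
    rw [hF_def]
    dsimp only
    rw [hsub x, Real.log_div (slp_pos_of_cross _ _ (h x hx')).ne' (by
      rw [← hsub x]; exact (slp_pos_of_cross _ _ (h' x hx')).ne')]
  -- rewrite RHS integral
  have rhs_eq : ∫ η in Ioo (0:ℝ) 1,
      ((⟪η • a + b - c, b - c⟫ + ‖η • a + b - c‖ * ⟪b - c, ‖c‖⁻¹ • c⟫)
          / (‖η • a + b - c‖ ^ 2 + ‖η • a + b - c‖ * ⟪η • a + b - c, ‖c‖⁻¹ • c⟫)
        - (⟪η • a + b, b⟫ + ‖η • a + b‖ * ⟪b, ‖c‖⁻¹ • c⟫)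
          / (‖η • a + b‖ ^ 2 + ‖η • a + b‖ * ⟪η • a + b, ‖c‖⁻¹ • c⟫))
      = ∫ η in Ioo (0:ℝ) 1, F' η * η := by
    apply setIntegral_congr_fun measurableSet_Ioo
    intro x hx
    have hx' : x ∈ Icc (0:ℝ) 1 := Ioo_subset_Icc_self hx
    have k1 := slp_key_alg a b c x (h x hx')
    have k2 := slp_key_alg a (b - c) c x (h' x hx')
    rw [hsub x] at k2
    dsimp only
    rw [hF'_def]
    dsimp only
    rw [hsub x]
    have : F' x * x = x * ((⟪x • a + b, a⟫ / ‖x • a + b‖ * ‖c‖ + ⟪a, c⟫)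
        / (‖x • a + b‖ * ‖c‖ + ⟪x • a + b, c⟫))
      - x * ((⟪x • a + b - c, a⟫ / ‖x • a + b - c‖ * ‖c‖ + ⟪a, c⟫)
        / (‖x • a + b - c‖ * ‖c‖ + ⟪x • a + b - c, c⟫)) := by
      rw [hF'_def]; dsimp only; rw [hsub x]; ring
    rw [← hsub x] at k2 ⊢
    rw [hsub x] at k2 ⊢
    linarith [k1, k2]
  rw [lhs_eq, rhs_eq]
  -- convert set integrals over Ioo to interval integrals
  have conv1 : ∫ η in Ioo (0:ℝ) 1, F η = ∫ η in (0:ℝ)..1, F η := by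
    rw [intervalIntegral.integral_of_le (by norm_num : (0:ℝ) ≤ 1),
      ← integral_Ioc_eq_integral_Ioo]
  have conv2 : ∫ η in Ioo (0:ℝ) 1, F' η * η = ∫ η in (0:ℝ)..1, F' η * η := by
    rw [intervalIntegral.integral_of_le (by norm_num : (0:ℝ) ≤ 1),
      ← integral_Ioc_eq_integral_Ioo]
  rw [conv1, conv2, ibp]
  -- finally compute F 1
  have hF1 : F 1 = Real.log ((‖a + b‖ * ‖c‖ + ⟪a + b, c⟫)
      / (‖a + b - c‖ * ‖c‖ + ⟪a + b - c, c⟫)) := by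
    have h1 : (1:ℝ) ∈ Icc (0:ℝ) 1 := by norm_num
    have e1 : (1:ℝ) • a + b = a + b := by rw [one_smul]
    have e2 : (1:ℝ) • a + (b - c) = a + b - c := by rw [one_smul]; abel
    rw [hF_def]
    dsimp only
    rw [e1, e2, Real.log_div]
    · have := slp_pos_of_cross _ _ (h 1 h1)
      rw [e1] at this
      exact this.ne'
    · have := slp_pos_of_cross _ _ (h' 1 h1)
      rw [e2] at this
      exact this.ne'
  rw [hF1]
end

section
/- Let a, b, c ∈ ℝ³ with a ≠ 0 and |c| = 1. Set p = (a·b)/|a|², q = √( |b|²/|a|² − p² ), α₀ = q|a| + (b − p a)·c, α₁ = 2 q (a·c), and α₂ = q|a| − (b − p a)·c. Then the discriminant D = 4 α₀ α₂ − α₁² is nonnegative, i.e. α₁² ≤ 4 α₀ α₂, and D = 0 if and only if (a × b)·c = 0, i.e. if and only if a, b, c are coplanar. -/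
open scoped RealInnerProductSpace

set_option maxHeartbeats 1000000 in
/-- The discriminant `D = 4α₀α₂ − α₁²` of the denominator is nonnegative, and
vanishes exactly when `(a × b)·c = 0`, i.e. when `a, b, c` are coplanar. -/
theorem discriminant_nonneg (a b c : EuclideanSpace ℝ (Fin 3))
    (ha : a ≠ 0) (hc : ‖c‖ = 1)
    (p q α₀ α₁ α₂ : ℝ)
    (hp : p = ⟪a, b⟫ / ‖a‖ ^ 2)
    (hq : q = Real.sqrt (‖b‖ ^ 2 / ‖a‖ ^ 2 - p ^ 2))
    (hα₀ : α₀ = q * ‖a‖ + ⟪b - p • a, c⟫)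
    (hα₁ : α₁ = 2 * q * ⟪a, c⟫)
    (hα₂ : α₂ = q * ‖a‖ - ⟪b - p • a, c⟫) :
    α₁ ^ 2 ≤ 4 * α₀ * α₂ ∧
    (4 * α₀ * α₂ - α₁ ^ 2 = 0 ↔ ⟪cross3 a b, c⟫ = 0) := by
  have hA0 : (0:ℝ) < ‖a‖ ^ 2 := pow_pos (norm_pos_iff.mpr ha) 2
  -- coordinate abbreviations
  set a0 := a 0 with ha0; set a1 := a 1 with ha1; set a2 := a 2 with ha2
  set b0 := b 0 with hb0; set b1 := b 1 with hb1; set b2 := b 2 with hb2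
  set c0 := c 0 with hc0; set c1 := c 1 with hc1; set c2 := c 2 with hc2'
  have hn : ‖a‖ ^ 2 = a0 ^ 2 + a1 ^ 2 + a2 ^ 2 := by
    rw [← real_inner_self_eq_norm_sq]
    simp only [PiLp.inner_apply, Fin.sum_univ_three, RCLike.inner_apply, conj_trivial]; rw [ha0, ha1, ha2]; ring
  have hnb : ‖b‖ ^ 2 = b0 ^ 2 + b1 ^ 2 + b2 ^ 2 := by
    rw [← real_inner_self_eq_norm_sq]
    simp only [PiLp.inner_apply, Fin.sum_univ_three, RCLike.inner_apply, conj_trivial]; rw [hb0, hb1, hb2]; ring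
  have hC : c0 ^ 2 + c1 ^ 2 + c2 ^ 2 = 1 := by
    have := hn; have hcn : ‖c‖ ^ 2 = c0 ^ 2 + c1 ^ 2 + c2 ^ 2 := by
      rw [← real_inner_self_eq_norm_sq]
      simp only [PiLp.inner_apply, Fin.sum_univ_three, RCLike.inner_apply, conj_trivial]; rw [hc0, hc1, hc2']; ring
    rw [← hcn, hc]; norm_num
  have hab : ⟪a, b⟫ = a0 * b0 + a1 * b1 + a2 * b2 := by
    simp [PiLp.inner_apply, Fin.sum_univ_three, RCLike.inner_apply, mul_comm]; rfl
  have hac : ⟪a, c⟫ = a0 * c0 + a1 * c1 + a2 * c2 := by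
    simp [PiLp.inner_apply, Fin.sum_univ_three, RCLike.inner_apply, mul_comm]; rfl
  have hbc : ⟪b, c⟫ = b0 * c0 + b1 * c1 + b2 * c2 := by
    simp [PiLp.inner_apply, Fin.sum_univ_three, RCLike.inner_apply, mul_comm]; rfl
  have hw : ⟪cross3 a b, c⟫ =
      (a1 * b2 - a2 * b1) * c0 + (a2 * b0 - a0 * b2) * c1 + (a0 * b1 - a1 * b0) * c2 := by
    simp [cross3, PiLp.inner_apply, Fin.sum_univ_three, RCLike.inner_apply]
    rw [ha0, ha1, ha2]; rw [hb0, hb1, hb2]; rw [hc0, hc1, hc2']; ring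
  set A : ℝ := a0 ^ 2 + a1 ^ 2 + a2 ^ 2 with hAdef
  have hApos : (0:ℝ) < A := by rw [← hn]; exact hA0
  -- p * A = a·b
  have hpA : p * A = a0 * b0 + a1 * b1 + a2 * b2 := by
    rw [hp, hab, hn]; field_simp
  -- q ≥ 0 and q² relation
  have hq0 : 0 ≤ ‖b‖ ^ 2 / ‖a‖ ^ 2 - p ^ 2 := by
    have hcs := real_inner_mul_inner_self_le a b
    rw [real_inner_self_eq_norm_sq, real_inner_self_eq_norm_sq] at hcs
    have hcs2 : ⟪a, b⟫ ^ 2 ≤ ‖a‖ ^ 2 * ‖b‖ ^ 2 := by rw [sq]; exact hcs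
    rw [hp, sub_nonneg, div_pow, div_le_div_iff₀ (by positivity) hA0]
    have h2 := mul_le_mul_of_nonneg_right hcs2 hA0.le
    ring_nf at h2 ⊢
    linarith only [h2]
  have hq2 : q ^ 2 = ‖b‖ ^ 2 / ‖a‖ ^ 2 - p ^ 2 := by rw [hq, Real.sq_sqrt hq0]
  have hq2m : q ^ 2 * A ^ 2 =
      (b0 ^ 2 + b1 ^ 2 + b2 ^ 2) * A - (a0 * b0 + a1 * b1 + a2 * b2) ^ 2 := by
    rw [hq2, hnb, hp, hab, hn]
    field_simp
  have ht : ⟪b - p • a, c⟫ =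
      (b0 * c0 + b1 * c1 + b2 * c2) - p * (a0 * c0 + a1 * c1 + a2 * c2) := by
    rw [inner_sub_left, real_inner_smul_left, hbc, hac]
  have hnn : 0 ≤ ‖a‖ := norm_nonneg a
  have hn2 : ‖a‖ ^ 2 = A := hn
  set w : ℝ := (a1 * b2 - a2 * b1) * c0 + (a2 * b0 - a0 * b2) * c1 + (a0 * b1 - a1 * b0) * c2
    with hwdef
  -- the key polynomial identity
  have key : (4 * α₀ * α₂ - α₁ ^ 2) * A ^ 2 = 4 * w ^ 2 * A := by
    rw [hα₀, hα₁, hα₂, ht, hac]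
    set ac : ℝ := a0 * c0 + a1 * c1 + a2 * c2
    set bc : ℝ := b0 * c0 + b1 * c1 + b2 * c2
    linear_combination (4 * q ^ 2 * A ^ 2) * hn2 + (4 * (A - ac ^ 2)) * hq2m +
      (4 * ac * ((bc - p * ac) * A + bc * A - (a0 * b0 + a1 * b1 + a2 * b2) * ac)) * hpA +
      (-4 * ((b0 ^ 2 + b1 ^ 2 + b2 ^ 2) * A - (a0 * b0 + a1 * b1 + a2 * b2) ^ 2) * A) * hC
  have hD : (4 * α₀ * α₂ - α₁ ^ 2) * A = 4 * w ^ 2 := by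
    have h2 : (4 * α₀ * α₂ - α₁ ^ 2) * A * A = 4 * w ^ 2 * A := by
      rw [← key]; ring
    exact mul_right_cancel₀ hApos.ne' h2
  constructor
  · have h6 : α₁ ^ 2 * A ≤ 4 * α₀ * α₂ * A := by
      have h7 : 4 * α₀ * α₂ * A - α₁ ^ 2 * A = 4 * w ^ 2 := by linear_combination hD
      linarith only [h7, sq_nonneg w]
    exact le_of_mul_le_mul_right h6 hApos
  · rw [hw]
    constructor
    · intro h
      have h4 : 4 * w ^ 2 = 0 := by rw [← hD, h, zero_mul]
      have hw2 : w ^ 2 = 0 := by linarith only [h4]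
      exact pow_eq_zero_iff two_ne_zero |>.mp hw2
    · intro h
      have h8 : (4 * α₀ * α₂ - α₁ ^ 2) * A = 0 := by rw [hD, h]; ring
      rcases mul_eq_zero.mp h8 with h' | h'
      · exact h'
      · exact absurd h' hApos.ne'
end

section
/- Let u₁, u₂, v₁, v₂ ∈ ℝ³ be such that {u₁,u₂} and {v₁,v₂} are each linearly independent and the closed triangles T_τ = {y₁ u₁ + y₂ u₂ : 0 ≤ y₂ ≤ y₁ ≤ 1} and T_σ = {x₁ v₁ + x₂ v₂ : 0 ≤ x₂ ≤ x₁ ≤ 1} intersect only in their common vertex, i.e. T_τ ∩ T_σ = {0}. Then ∫_{π×π} 1/|y₁ u₁ + y₂ u₂ − x₁ v₁ − x₂ v₂| d(x,y) = (1/3) ∫_{(0,1)³} [ η₃/|η₃ u₁ + η₃ η₄ u₂ − v₁ − η₂ v₂| + η₃/|u₁ + η₂ u₂ − η₃ v₁ − η₃ η₄ v₂| ] d(η₂,η₃,η₄), and both sides are finite. -/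
open MeasureTheory Set ENNReal

noncomputable section
local notation "E" => EuclideanSpace ℝ (Fin 3)

lemma scale_Ioo (c : ℝ) (hc : 0 < c) (g : ℝ → ℝ≥0∞) (hg : Measurable g) :
    ∫⁻ t in Ioo (0:ℝ) c, g t = ∫⁻ s in Ioo (0:ℝ) 1, ENNReal.ofReal c * g (c * s) := by
  have hc' : (c:ℝ) ≠ 0 := hc.ne'
  have hmap : Measure.map (fun s : ℝ => c * s) volume = ENNReal.ofReal |c⁻¹| • volume :=
    Real.map_volume_mul_left hc'
  have hpre : (fun s : ℝ => c * s) ⁻¹' (Ioo 0 c) = Ioo 0 1 := by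
    ext s
    simp only [mem_preimage, mem_Ioo]
    constructor
    · rintro ⟨h1, h2⟩
      exact ⟨by nlinarith, by nlinarith⟩
    · rintro ⟨h1, h2⟩
      exact ⟨by nlinarith, by nlinarith⟩
  have key : ∫⁻ s in Ioo (0:ℝ) 1, g (c * s) =
      ENNReal.ofReal c⁻¹ * ∫⁻ t in Ioo (0:ℝ) c, g t := by
    have := lintegral_map hg (measurable_const_mul c)
      (μ := volume.restrict ((fun s : ℝ => c * s) ⁻¹' (Ioo 0 c)))
    rw [hpre] at this
    rw [← this, ← hpre, ← Measure.restrict_map (measurable_const_mul c) measurableSet_Ioo, hmap,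
      Measure.restrict_smul, lintegral_smul_measure, abs_of_pos (inv_pos.2 hc), smul_eq_mul]
  rw [lintegral_const_mul' _ _ (by simp), key, ← mul_assoc, ← ENNReal.ofReal_mul hc.le,
    mul_inv_cancel₀ hc', ENNReal.ofReal_one, one_mul]

lemma meas_oin {α : Type*} [MeasurableSpace α] (f : α → E) (hf : Measurable f) :
    Measurable fun z => ENNReal.ofReal (1/‖f z‖) := by
  have h1 : Measurable fun z => ‖f z‖ := hf.norm
  simpa [one_div, Function.comp_def, Pi.inv_def] using ENNReal.measurable_ofReal.comp h1.inv

lemma innerAll (a₁ a₂ b₁ b₂ : E) (x₁ : ℝ) (hx₁ : 0 < x₁) :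
    ∫⁻ x₂ in Ioo (0:ℝ) x₁, ∫⁻ y₁ in Ioo (0:ℝ) x₁, ∫⁻ y₂ in Ioo (0:ℝ) y₁,
        ENNReal.ofReal (1/‖x₁•a₁ + x₂•a₂ - y₁•b₁ - y₂•b₂‖)
    = ENNReal.ofReal (x₁^2) *
      ∫⁻ η₂ in Ioo (0:ℝ) 1, ∫⁻ η₃ in Ioo (0:ℝ) 1, ∫⁻ η₄ in Ioo (0:ℝ) 1,
        ENNReal.ofReal (η₃/‖a₁ + η₂•a₂ - η₃•b₁ - (η₃*η₄)•b₂‖) := by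
  have vmeas : ∀ c : E, ∀ w : E, Measurable fun r : ℝ => c + r • w := by
    intro c w
    exact (continuous_const.add (continuous_id.smul continuous_const)).measurable
  -- innermost measurable
  have m1 : ∀ c : E, Measurable fun y₂ : ℝ => ENNReal.ofReal (1/‖c + y₂ • (-b₂)‖) :=
    fun c => meas_oin _ (vmeas c (-b₂))
  have step1 : ∀ x₂ : ℝ, ∫⁻ y₁ in Ioo (0:ℝ) x₁, ∫⁻ y₂ in Ioo (0:ℝ) y₁,
        ENNReal.ofReal (1/‖x₁•a₁ + x₂•a₂ - y₁•b₁ - y₂•b₂‖)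
      = ∫⁻ y₁ in Ioo (0:ℝ) x₁, ∫⁻ η₄ in Ioo (0:ℝ) 1,
          ENNReal.ofReal y₁ * ENNReal.ofReal (1/‖x₁•a₁ + x₂•a₂ - y₁•b₁ - (y₁*η₄)•b₂‖) := by
    intro x₂
    refine setLIntegral_congr_fun measurableSet_Ioo (
      fun y₁ hy₁ => ?_)
    have := scale_Ioo y₁ hy₁.1
      (fun y₂ => ENNReal.ofReal (1/‖x₁•a₁ + x₂•a₂ - y₁•b₁ + y₂ • (-b₂)‖))
      (meas_oin _ (vmeas _ _))
    simp only [smul_neg, ← sub_eq_add_neg] at this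
    exact this
  -- measurability of the inner single integral as a function of y₁
  have gmeas : ∀ x₂ : ℝ, Measurable fun y₁ : ℝ => ∫⁻ η₄ in Ioo (0:ℝ) 1,
      ENNReal.ofReal y₁ * ENNReal.ofReal (1/‖x₁•a₁ + x₂•a₂ - y₁•b₁ - (y₁*η₄)•b₂‖) := by
    intro x₂
    apply Measurable.lintegral_prod_right (f := fun y₁ η₄ => ENNReal.ofReal y₁ *
      ENNReal.ofReal (1/‖x₁•a₁ + x₂•a₂ - y₁•b₁ - (y₁*η₄)•b₂‖))
    simp only [Function.uncurry_def]
    apply Measurable.fun_mul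
    · exact ENNReal.measurable_ofReal.comp measurable_fst
    · apply meas_oin
      have : Continuous fun p : ℝ × ℝ => x₁•a₁ + x₂•a₂ - p.1•b₁ - (p.1*p.2)•b₂ := by
        fun_prop
      exact this.measurable
  have step2 : ∀ x₂ : ℝ, ∫⁻ y₁ in Ioo (0:ℝ) x₁, ∫⁻ η₄ in Ioo (0:ℝ) 1,
        ENNReal.ofReal y₁ * ENNReal.ofReal (1/‖x₁•a₁ + x₂•a₂ - y₁•b₁ - (y₁*η₄)•b₂‖)
      = ∫⁻ η₃ in Ioo (0:ℝ) 1, ENNReal.ofReal x₁ * ∫⁻ η₄ in Ioo (0:ℝ) 1,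
          ENNReal.ofReal (x₁*η₃) *
            ENNReal.ofReal (1/‖x₁•a₁ + x₂•a₂ - (x₁*η₃)•b₁ - ((x₁*η₃)*η₄)•b₂‖) := by
    intro x₂
    rw [scale_Ioo x₁ hx₁ _ (gmeas x₂)]
  have hmeas : Measurable fun x₂ : ℝ => ∫⁻ η₃ in Ioo (0:ℝ) 1,
      ENNReal.ofReal x₁ * ∫⁻ η₄ in Ioo (0:ℝ) 1,
        ENNReal.ofReal (x₁*η₃) *
          ENNReal.ofReal (1/‖x₁•a₁ + x₂•a₂ - (x₁*η₃)•b₁ - ((x₁*η₃)*η₄)•b₂‖) := by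
    apply Measurable.lintegral_prod_right (f := fun x₂ η₃ => ENNReal.ofReal x₁ *
      ∫⁻ η₄ in Ioo (0:ℝ) 1, ENNReal.ofReal (x₁*η₃) *
        ENNReal.ofReal (1/‖x₁•a₁ + x₂•a₂ - (x₁*η₃)•b₁ - ((x₁*η₃)*η₄)•b₂‖))
    apply Measurable.mul measurable_const
    apply Measurable.lintegral_prod_right (f := fun (p : ℝ × ℝ) η₄ =>
      ENNReal.ofReal (x₁*p.2) *
        ENNReal.ofReal (1/‖x₁•a₁ + p.1•a₂ - (x₁*p.2)•b₁ - ((x₁*p.2)*η₄)•b₂‖))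
    simp only [Function.uncurry_def]
    apply Measurable.fun_mul
    · apply ENNReal.measurable_ofReal.comp
      fun_prop
    · apply meas_oin
      have : Continuous fun q : (ℝ × ℝ) × ℝ =>
          x₁•a₁ + q.1.1•a₂ - (x₁*q.1.2)•b₁ - ((x₁*q.1.2)*q.2)•b₂ := by fun_prop
      exact this.measurable
  calc ∫⁻ x₂ in Ioo (0:ℝ) x₁, ∫⁻ y₁ in Ioo (0:ℝ) x₁, ∫⁻ y₂ in Ioo (0:ℝ) y₁,
        ENNReal.ofReal (1/‖x₁•a₁ + x₂•a₂ - y₁•b₁ - y₂•b₂‖)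
      = ∫⁻ x₂ in Ioo (0:ℝ) x₁, ∫⁻ η₃ in Ioo (0:ℝ) 1,
          ENNReal.ofReal x₁ * ∫⁻ η₄ in Ioo (0:ℝ) 1,
            ENNReal.ofReal (x₁*η₃) *
              ENNReal.ofReal (1/‖x₁•a₁ + x₂•a₂ - (x₁*η₃)•b₁ - ((x₁*η₃)*η₄)•b₂‖) := by
        refine setLIntegral_congr_fun measurableSet_Ioo (
          fun x₂ _ => ?_)
        rw [step1 x₂, step2 x₂]
    _ = ∫⁻ η₂ in Ioo (0:ℝ) 1, ENNReal.ofReal x₁ * ∫⁻ η₃ in Ioo (0:ℝ) 1,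
          ENNReal.ofReal x₁ * ∫⁻ η₄ in Ioo (0:ℝ) 1,
            ENNReal.ofReal (x₁*η₃) *
              ENNReal.ofReal
                (1/‖x₁•a₁ + (x₁*η₂)•a₂ - (x₁*η₃)•b₁ - ((x₁*η₃)*η₄)•b₂‖) := by
        rw [scale_Ioo x₁ hx₁ _ hmeas]
    _ = ∫⁻ η₂ in Ioo (0:ℝ) 1, ENNReal.ofReal x₁ * ∫⁻ η₃ in Ioo (0:ℝ) 1,
          ENNReal.ofReal x₁ * ∫⁻ η₄ in Ioo (0:ℝ) 1,
            ENNReal.ofReal (η₃/‖a₁ + η₂•a₂ - η₃•b₁ - (η₃*η₄)•b₂‖) := by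
        refine setLIntegral_congr_fun measurableSet_Ioo (
          fun η₂ _ => ?_)
        congr 1
        refine setLIntegral_congr_fun measurableSet_Ioo (
          fun η₃ hη₃ => ?_)
        congr 1
        refine setLIntegral_congr_fun measurableSet_Ioo (
          fun η₄ _ => ?_)
        have hvec : x₁•a₁ + (x₁*η₂)•a₂ - (x₁*η₃)•b₁ - ((x₁*η₃)*η₄)•b₂
            = x₁ • (a₁ + η₂•a₂ - η₃•b₁ - (η₃*η₄)•b₂) := by
          module
        rw [hvec, ← ENNReal.ofReal_mul (mul_nonneg hx₁.le hη₃.1.le), norm_smul, Real.norm_eq_abs,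
          abs_of_pos hx₁]
        congr 1
        rcases eq_or_ne ‖a₁ + η₂•a₂ - η₃•b₁ - (η₃*η₄)•b₂‖ 0 with h0 | h0
        · simp [h0]
        · field_simp
    _ = ENNReal.ofReal (x₁^2) *
        ∫⁻ η₂ in Ioo (0:ℝ) 1, ∫⁻ η₃ in Ioo (0:ℝ) 1, ∫⁻ η₄ in Ioo (0:ℝ) 1,
          ENNReal.ofReal (η₃/‖a₁ + η₂•a₂ - η₃•b₁ - (η₃*η₄)•b₂‖) := by
        simp_rw [lintegral_const_mul' (ENNReal.ofReal x₁) _ ENNReal.ofReal_ne_top,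
          ← mul_assoc, ← ENNReal.ofReal_mul hx₁.le]
        rw [sq]


lemma setLIntegral_prod_slice {α β : Type*} [MeasurableSpace α] [MeasurableSpace β]
    (μ : Measure α) (ν : Measure β) [SFinite ν]
    (f : α × β → ℝ≥0∞) (hf : Measurable f) (s : Set α) (t : α → Set β)
    (hs : MeasurableSet s)
    (hA : MeasurableSet {q : α × β | q.1 ∈ s ∧ q.2 ∈ t q.1}) :
    ∫⁻ p in {q : α × β | q.1 ∈ s ∧ q.2 ∈ t q.1}, f p ∂(μ.prod ν)
      = ∫⁻ x in s, ∫⁻ y in t x, f (x, y) ∂ν ∂μ := by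
  set A := {q : α × β | q.1 ∈ s ∧ q.2 ∈ t q.1} with hAdef
  rw [← lintegral_indicator hA, lintegral_prod _ (hf.indicator hA).aemeasurable]
  have h1 : ∀ x, (∫⁻ y, A.indicator f (x, y) ∂ν)
      = s.indicator (fun x => ∫⁻ y in t x, f (x, y) ∂ν) x := by
    intro x
    by_cases hx : x ∈ s
    · have hslice : MeasurableSet (t x) := by
        have : t x = Prod.mk x ⁻¹' A := by
          ext y; simp [hAdef, hx]
        rw [this]; exact measurable_prodMk_left hA
      rw [indicator_of_mem hx]
      rw [← lintegral_indicator hslice]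
      congr 1; ext y
      by_cases hy : y ∈ t x
      · rw [indicator_of_mem hy, indicator_of_mem (by exact ⟨hx, hy⟩)]
      · rw [indicator_of_notMem hy, indicator_of_notMem (by simp [hAdef, hy, hx])]
    · rw [indicator_of_notMem hx]
      have : ∀ y, A.indicator f (x, y) = 0 := by
        intro y; exact indicator_of_notMem (by simp [hAdef, hx]) _
      simp [this]
  simp_rw [h1]
  rw [lintegral_indicator hs]


lemma lint_sq : ∫⁻ x in Ioo (0:ℝ) 1, ENNReal.ofReal (x^2) = ENNReal.ofReal (1/3) := by
  rw [← ofReal_integral_eq_lintegral_ofReal]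
  · congr 1
    rw [← integral_Ioc_eq_integral_Ioo, ← intervalIntegral.integral_of_le zero_le_one]
    simp [integral_pow]
    norm_num
  · exact (continuous_pow 2).continuousOn.integrableOn_Icc.mono_set Ioo_subset_Icc_self
  · exact Filter.Eventually.of_forall fun x => sq_nonneg x


lemma helperA (a₁ a₂ b₁ b₂ : E) :
    ∫⁻ p : (ℝ × ℝ) × (ℝ × ℝ) in
        {q : (ℝ × ℝ) × (ℝ × ℝ) | (0 < q.1.2 ∧ q.1.2 < q.1.1 ∧ q.1.1 < 1) ∧
          (0 < q.2.2 ∧ q.2.2 < q.2.1 ∧ q.2.1 < q.1.1)},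
      ENNReal.ofReal (1/‖p.1.1•a₁ + p.1.2•a₂ - p.2.1•b₁ - p.2.2•b₂‖)
    = ENNReal.ofReal (1/3) *
      ∫⁻ η : ℝ × ℝ × ℝ in Ioo (0:ℝ) 1 ×ˢ (Ioo (0:ℝ) 1 ×ˢ Ioo (0:ℝ) 1),
        ENNReal.ofReal (η.2.1/‖a₁ + η.1•a₂ - η.2.1•b₁ - (η.2.1*η.2.2)•b₂‖) := by
  classical
  set F : (ℝ × ℝ) × (ℝ × ℝ) → ℝ≥0∞ :=
    fun p => ENNReal.ofReal (1/‖p.1.1•a₁ + p.1.2•a₂ - p.2.1•b₁ - p.2.2•b₂‖) with hFdef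
  have hF : Measurable F := by
    apply meas_oin
    have : Continuous fun p : (ℝ × ℝ) × (ℝ × ℝ) =>
        p.1.1•a₁ + p.1.2•a₂ - p.2.1•b₁ - p.2.2•b₂ := by fun_prop
    exact this.measurable
  set s : Set (ℝ × ℝ) := {x | 0 < x.2 ∧ x.2 < x.1 ∧ x.1 < 1} with hsdef
  set t : ℝ × ℝ → Set (ℝ × ℝ) := fun x => {y | 0 < y.2 ∧ y.2 < y.1 ∧ y.1 < x.1} with htdef
  have hs : MeasurableSet s := by
    apply MeasurableSet.inter (measurableSet_lt measurable_const measurable_snd)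
    exact MeasurableSet.inter (measurableSet_lt measurable_snd measurable_fst)
      (measurableSet_lt measurable_fst measurable_const)
  have hA : MeasurableSet {q : (ℝ × ℝ) × (ℝ × ℝ) | q.1 ∈ s ∧ q.2 ∈ t q.1} := by
    apply MeasurableSet.inter
    · exact measurable_fst hs
    · apply MeasurableSet.inter
        (measurableSet_lt measurable_const (measurable_snd.comp measurable_snd))
      exact MeasurableSet.inter
        (measurableSet_lt (measurable_snd.comp measurable_snd)
          (measurable_fst.comp measurable_snd))
        (measurableSet_lt (measurable_fst.comp measurable_snd)
          (measurable_fst.comp measurable_fst))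
  set B : Set ((ℝ × ℝ) × (ℝ × ℝ)) :=
    {q | 0 < q.2.2 ∧ q.2.2 < q.2.1 ∧ q.2.1 < q.1.1} with hBdef
  have hB : MeasurableSet B := by
    apply MeasurableSet.inter
      (measurableSet_lt measurable_const (measurable_snd.comp measurable_snd))
    exact MeasurableSet.inter
      (measurableSet_lt (measurable_snd.comp measurable_snd)
        (measurable_fst.comp measurable_snd))
      (measurableSet_lt (measurable_fst.comp measurable_snd)
        (measurable_fst.comp measurable_fst))
  have ht : ∀ x : ℝ × ℝ, MeasurableSet (t x) := by
    intro x
    apply MeasurableSet.inter (measurableSet_lt measurable_const measurable_snd)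
    exact MeasurableSet.inter (measurableSet_lt measurable_snd measurable_fst)
      (measurableSet_lt measurable_fst measurable_const)
  have hΦ : ∀ x : ℝ × ℝ, ∫⁻ y in t x, F (x, y) = ∫⁻ y, B.indicator F (x, y) := by
    intro x
    rw [← lintegral_indicator (ht x)]
    refine lintegral_congr fun y => ?_
    by_cases h : y ∈ t x
    · rw [indicator_of_mem h, indicator_of_mem (show (x, y) ∈ B from h)]
    · rw [indicator_of_notMem h, indicator_of_notMem (show (x, y) ∉ B from h)]
  have hΦmeas : Measurable fun x : ℝ × ℝ => ∫⁻ y, B.indicator F (x, y) :=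
    (hF.indicator hB).lintegral_prod_right'
  have hseq : s = {q : ℝ × ℝ | q.1 ∈ Ioo (0:ℝ) 1 ∧ q.2 ∈ Ioo (0:ℝ) q.1} := by
    ext x
    simp only [hsdef, mem_setOf_eq, mem_Ioo]
    constructor
    · rintro ⟨h1, h2, h3⟩; exact ⟨⟨h1.trans h2, h3⟩, h1, h2⟩
    · rintro ⟨⟨_, h3⟩, h1, h2⟩; exact ⟨h1, h2, h3⟩
  have hteq : ∀ c : ℝ, {y : ℝ × ℝ | 0 < y.2 ∧ y.2 < y.1 ∧ y.1 < c}
      = {q : ℝ × ℝ | q.1 ∈ Ioo (0:ℝ) c ∧ q.2 ∈ Ioo (0:ℝ) q.1} := by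
    intro c
    ext y
    simp only [mem_setOf_eq, mem_Ioo]
    constructor
    · rintro ⟨h1, h2, h3⟩; exact ⟨⟨h1.trans h2, h3⟩, h1, h2⟩
    · rintro ⟨⟨_, h3⟩, h1, h2⟩; exact ⟨h1, h2, h3⟩
  set K := ∫⁻ η₂ in Ioo (0:ℝ) 1, ∫⁻ η₃ in Ioo (0:ℝ) 1, ∫⁻ η₄ in Ioo (0:ℝ) 1,
      ENNReal.ofReal (η₃/‖a₁ + η₂•a₂ - η₃•b₁ - (η₃*η₄)•b₂‖) with hKdef
  calc ∫⁻ p : (ℝ × ℝ) × (ℝ × ℝ) in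
        {q : (ℝ × ℝ) × (ℝ × ℝ) | (0 < q.1.2 ∧ q.1.2 < q.1.1 ∧ q.1.1 < 1) ∧
          (0 < q.2.2 ∧ q.2.2 < q.2.1 ∧ q.2.1 < q.1.1)}, F p
      = ∫⁻ x in s, ∫⁻ y in t x, F (x, y) := by
        rw [Measure.volume_eq_prod]
        exact setLIntegral_prod_slice volume volume F hF s t hs hA
    _ = ∫⁻ x in s, ∫⁻ y, B.indicator F (x, y) := by
        exact setLIntegral_congr_fun hs ( fun x _ => hΦ x)
    _ = ∫⁻ x₁ in Ioo (0:ℝ) 1, ∫⁻ x₂ in Ioo (0:ℝ) x₁,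
          ∫⁻ y, B.indicator F ((x₁, x₂), y) := by
        rw [hseq, Measure.volume_eq_prod]
        exact setLIntegral_prod_slice volume volume _ hΦmeas _ _ measurableSet_Ioo
          (by
            apply MeasurableSet.inter
            · exact measurable_fst measurableSet_Ioo
            · exact MeasurableSet.inter
                (measurableSet_lt measurable_const measurable_snd)
                (measurableSet_lt measurable_snd measurable_fst))
    _ = ∫⁻ x₁ in Ioo (0:ℝ) 1, ∫⁻ x₂ in Ioo (0:ℝ) x₁,
          ∫⁻ y₁ in Ioo (0:ℝ) x₁, ∫⁻ y₂ in Ioo (0:ℝ) y₁, F ((x₁, x₂), (y₁, y₂)) := by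
        refine setLIntegral_congr_fun measurableSet_Ioo (
          fun x₁ _ => ?_)
        refine setLIntegral_congr_fun measurableSet_Ioo (
          fun x₂ _ => ?_)
        rw [← hΦ (x₁, x₂)]
        have : t (x₁, x₂) = {q : ℝ × ℝ | q.1 ∈ Ioo (0:ℝ) x₁ ∧ q.2 ∈ Ioo (0:ℝ) q.1} :=
          hteq x₁
        rw [this, Measure.volume_eq_prod]
        exact setLIntegral_prod_slice volume volume _ (hF.comp measurable_prodMk_left)
          _ _ measurableSet_Ioo
          (by
            apply MeasurableSet.inter
            · exact measurable_fst measurableSet_Ioo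
            · exact MeasurableSet.inter
                (measurableSet_lt measurable_const measurable_snd)
                (measurableSet_lt measurable_snd measurable_fst))
    _ = ∫⁻ x₁ in Ioo (0:ℝ) 1, ENNReal.ofReal (x₁^2) * K := by
        refine setLIntegral_congr_fun measurableSet_Ioo (
          fun x₁ hx₁ => ?_)
        exact innerAll a₁ a₂ b₁ b₂ x₁ hx₁.1
    _ = ENNReal.ofReal (1/3) * K := by
        simp_rw [mul_comm (ENNReal.ofReal (_^2)) K]
        rw [lintegral_const_mul K (f := fun x : ℝ => ENNReal.ofReal (x^2))
          (ENNReal.measurable_ofReal.comp ((continuous_pow 2).measurable)),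
          lint_sq, mul_comm]
    _ = ENNReal.ofReal (1/3) *
        ∫⁻ η : ℝ × ℝ × ℝ in Ioo (0:ℝ) 1 ×ˢ (Ioo (0:ℝ) 1 ×ˢ Ioo (0:ℝ) 1),
          ENNReal.ofReal (η.2.1/‖a₁ + η.1•a₂ - η.2.1•b₁ - (η.2.1*η.2.2)•b₂‖) := by
        congr 1
        have hg : Measurable fun η : ℝ × ℝ × ℝ =>
            ENNReal.ofReal (η.2.1/‖a₁ + η.1•a₂ - η.2.1•b₁ - (η.2.1*η.2.2)•b₂‖) := by
          apply ENNReal.measurable_ofReal.comp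
          apply Measurable.div
          · exact measurable_snd.fst
          · have : Continuous fun η : ℝ × ℝ × ℝ =>
                a₁ + η.1•a₂ - η.2.1•b₁ - (η.2.1*η.2.2)•b₂ := by fun_prop
            exact this.norm.measurable
        rw [Measure.volume_eq_prod, ← Measure.prod_restrict,
          lintegral_prod _ (hg.aemeasurable)]
        refine setLIntegral_congr_fun measurableSet_Ioo (
          fun η₂ _ => ?_)
        rw [Measure.volume_eq_prod, ← Measure.prod_restrict]
        exact (lintegral_prod
          (fun y : ℝ × ℝ =>
            ENNReal.ofReal (y.1/‖a₁ + η₂•a₂ - y.1•b₁ - (y.1*y.2)•b₂‖))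
          ((hg.comp measurable_prodMk_left).aemeasurable)).symm

/-- The closed triangle `{t₁ a + t₂ b : 0 ≤ t₂ ≤ t₁ ≤ 1} ⊂ ℝ³` with vertex at
the origin. -/
def closedTri0 (a b : EuclideanSpace ℝ (Fin 3)) : Set (EuclideanSpace ℝ (Fin 3)) :=
  {z | ∃ t₁ t₂ : ℝ, 0 ≤ t₂ ∧ t₂ ≤ t₁ ∧ t₁ ≤ 1 ∧ z = t₁ • a + t₂ • b}

lemma norm_four (A B C D : E) : ‖A + B - C - D‖ = ‖C + D - A - B‖ := by
  rw [sub_sub, sub_sub, norm_sub_rev]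

lemma vol_cube : volume ((Ioo (0:ℝ) 1) ×ˢ ((Ioo (0:ℝ) 1) ×ˢ (Ioo (0:ℝ) 1))) = 1 := by
  rw [Measure.volume_eq_prod, Measure.prod_prod, Measure.volume_eq_prod, Measure.prod_prod]
  simp [Real.volume_Ioo]

lemma vol_diag : volume {q : (ℝ × ℝ) × (ℝ × ℝ) | q.1.1 = q.2.1} = 0 := by
  have hNm : MeasurableSet {q : (ℝ × ℝ) × (ℝ × ℝ) | q.1.1 = q.2.1} :=
    measurableSet_eq_fun (measurable_fst.fst) (measurable_snd.fst)
  rw [Measure.volume_eq_prod, Measure.prod_apply hNm]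
  have h : ∀ x : ℝ × ℝ, (Prod.mk x ⁻¹' {q : (ℝ × ℝ) × (ℝ × ℝ) | q.1.1 = q.2.1})
      = (({x.1} : Set ℝ) ×ˢ (univ : Set ℝ)) := by
    intro x
    ext y
    simp only [mem_preimage, mem_setOf_eq, Set.mem_prod, mem_singleton_iff, mem_univ, and_true]
    exact eq_comm
  simp_rw [h]
  have h2 : ∀ x : ℝ × ℝ, volume (({x.1} : Set ℝ) ×ˢ (univ : Set ℝ)) = 0 := by
    intro x
    rw [Measure.volume_eq_prod, Measure.prod_prod]
    simp
  simp_rw [h2]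
  simp

/-- Reduction of the single layer potential integral for a pair of triangles
intersecting only in their common vertex to a three-dimensional integral; both
sides are finite. -/
theorem slp_common_vertex (u₁ u₂ v₁ v₂ : EuclideanSpace ℝ (Fin 3))
    (hu : LinearIndependent ℝ ![u₁, u₂]) (hv : LinearIndependent ℝ ![v₁, v₂])
    (hinter : closedTri0 u₁ u₂ ∩ closedTri0 v₁ v₂ = {0}) :
    IntegrableOn
        (fun P : (ℝ × ℝ) × (ℝ × ℝ) =>
          1 / ‖P.2.1 • u₁ + P.2.2 • u₂ - P.1.1 • v₁ - P.1.2 • v₂‖)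
        (refTri ×ˢ refTri) volume ∧
    IntegrableOn
        (fun η : ℝ × ℝ × ℝ =>
          η.2.1 / ‖η.2.1 • u₁ + (η.2.1 * η.2.2) • u₂ - v₁ - η.1 • v₂‖
            + η.2.1 / ‖u₁ + η.1 • u₂ - η.2.1 • v₁ - (η.2.1 * η.2.2) • v₂‖)
        ((Ioo (0:ℝ) 1) ×ˢ ((Ioo (0:ℝ) 1) ×ˢ (Ioo (0:ℝ) 1))) volume ∧
    ∫ P in refTri ×ˢ refTri,
        1 / ‖P.2.1 • u₁ + P.2.2 • u₂ - P.1.1 • v₁ - P.1.2 • v₂‖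
      = (1/3) * ∫ η in (Ioo (0:ℝ) 1) ×ˢ ((Ioo (0:ℝ) 1) ×ˢ (Ioo (0:ℝ) 1)),
          (η.2.1 / ‖η.2.1 • u₁ + (η.2.1 * η.2.2) • u₂ - v₁ - η.1 • v₂‖
            + η.2.1 / ‖u₁ + η.1 • u₂ - η.2.1 • v₁ - (η.2.1 * η.2.2) • v₂‖) := by
  classical
  set f : (ℝ × ℝ) × (ℝ × ℝ) → ℝ :=
    fun P => 1 / ‖P.2.1 • u₁ + P.2.2 • u₂ - P.1.1 • v₁ - P.1.2 • v₂‖ with hfd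
  set g1 : ℝ × ℝ × ℝ → ℝ :=
    fun η => η.2.1 / ‖η.2.1 • u₁ + (η.2.1 * η.2.2) • u₂ - v₁ - η.1 • v₂‖ with hg1d
  set g2 : ℝ × ℝ × ℝ → ℝ :=
    fun η => η.2.1 / ‖u₁ + η.1 • u₂ - η.2.1 • v₁ - (η.2.1 * η.2.2) • v₂‖ with hg2d
  set cube : Set (ℝ × ℝ × ℝ) :=
    (Ioo (0:ℝ) 1) ×ˢ ((Ioo (0:ℝ) 1) ×ˢ (Ioo (0:ℝ) 1)) with hcubed
  have hcubem : MeasurableSet cube :=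
    measurableSet_Ioo.prod (measurableSet_Ioo.prod measurableSet_Ioo)
  -- measurability
  have hfm : Measurable f := by
    have hc : Continuous fun P : (ℝ × ℝ) × (ℝ × ℝ) =>
        ‖P.2.1 • u₁ + P.2.2 • u₂ - P.1.1 • v₁ - P.1.2 • v₂‖ := by fun_prop
    simpa [hfd, one_div, Pi.inv_def] using hc.measurable.inv
  have hg1m : Measurable g1 := by
    apply Measurable.div
    · exact measurable_snd.fst
    · have : Continuous fun η : ℝ × ℝ × ℝ =>
          η.2.1 • u₁ + (η.2.1 * η.2.2) • u₂ - v₁ - η.1 • v₂ := by fun_prop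
      exact this.norm.measurable
  have hg2m : Measurable g2 := by
    apply Measurable.div
    · exact measurable_snd.fst
    · have : Continuous fun η : ℝ × ℝ × ℝ =>
          u₁ + η.1 • u₂ - η.2.1 • v₁ - (η.2.1 * η.2.2) • v₂ := by fun_prop
      exact this.norm.measurable
  -- compact set for bounds
  set Kc : Set (ℝ × ℝ × ℝ) := (Icc (0:ℝ) 1) ×ˢ ((Icc (0:ℝ) 1) ×ˢ (Icc (0:ℝ) 1)) with hKcd
  have hKcc : IsCompact Kc := (isCompact_Icc.prod (isCompact_Icc.prod isCompact_Icc))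
  have hKcne : Kc.Nonempty := ⟨(0, 0, 0), by simp [hKcd, mem_prod]⟩
  have hcubeKc : cube ⊆ Kc := by
    intro η hη
    exact ⟨Ioo_subset_Icc_self hη.1,
      Ioo_subset_Icc_self hη.2.1, Ioo_subset_Icc_self hη.2.2⟩
  -- positivity of denominators on Kc
  have hpos1 : ∀ η ∈ Kc, 0 < ‖η.2.1 • u₁ + (η.2.1 * η.2.2) • u₂ - v₁ - η.1 • v₂‖ := by
    rintro ⟨η₂, η₃, η₄⟩ hη
    simp only [norm_pos_iff]
    intro h0
    have hz : η₃ • u₁ + (η₃ * η₄) • u₂ = v₁ + η₂ • v₂ := by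
      rw [sub_sub, sub_eq_zero] at h0
      exact h0
    obtain ⟨h₂, h₃, h₄⟩ :
        η₂ ∈ Icc (0:ℝ) 1 ∧ η₃ ∈ Icc (0:ℝ) 1 ∧ η₄ ∈ Icc (0:ℝ) 1 := ⟨hη.1, hη.2.1, hη.2.2⟩
    have hmemU : (v₁ + η₂ • v₂) ∈ closedTri0 u₁ u₂ := by
      refine ⟨η₃, η₃ * η₄, mul_nonneg h₃.1 h₄.1, ?_, h₃.2, hz ▸ rfl⟩
      nlinarith [h₃.1, h₄.1, h₄.2]
    have hmemV : (v₁ + η₂ • v₂) ∈ closedTri0 v₁ v₂ :=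
      ⟨1, η₂, h₂.1, h₂.2, le_refl 1, by rw [one_smul]⟩
    have hmem : (v₁ + η₂ • v₂) ∈ closedTri0 u₁ u₂ ∩ closedTri0 v₁ v₂ := ⟨hmemU, hmemV⟩
    rw [hinter, mem_singleton_iff] at hmem
    have hcon : (-η₂) • v₂ = v₁ := by
      rw [neg_smul, eq_comm, ← add_eq_zero_iff_eq_neg]
      exact hmem
    have := (linearIndependent_fin2.mp hv).2 (-η₂)
    simp only [Matrix.cons_val_one, Matrix.head_cons, Matrix.cons_val_zero] at this
    exact this hcon
  have hpos2 : ∀ η ∈ Kc, 0 < ‖u₁ + η.1 • u₂ - η.2.1 • v₁ - (η.2.1 * η.2.2) • v₂‖ := by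
    rintro ⟨η₂, η₃, η₄⟩ hη
    simp only [norm_pos_iff]
    intro h0
    have hz : u₁ + η₂ • u₂ = η₃ • v₁ + (η₃ * η₄) • v₂ := by
      rw [sub_sub, sub_eq_zero] at h0
      exact h0
    obtain ⟨h₂, h₃, h₄⟩ :
        η₂ ∈ Icc (0:ℝ) 1 ∧ η₃ ∈ Icc (0:ℝ) 1 ∧ η₄ ∈ Icc (0:ℝ) 1 := ⟨hη.1, hη.2.1, hη.2.2⟩
    have hmemU : (u₁ + η₂ • u₂) ∈ closedTri0 u₁ u₂ :=
      ⟨1, η₂, h₂.1, h₂.2, le_refl 1, by rw [one_smul]⟩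
    have hmemV : (u₁ + η₂ • u₂) ∈ closedTri0 v₁ v₂ := by
      refine ⟨η₃, η₃ * η₄, mul_nonneg h₃.1 h₄.1, ?_, h₃.2, hz⟩
      nlinarith [h₃.1, h₄.1, h₄.2]
    have hmem : (u₁ + η₂ • u₂) ∈ closedTri0 u₁ u₂ ∩ closedTri0 v₁ v₂ := ⟨hmemU, hmemV⟩
    rw [hinter, mem_singleton_iff] at hmem
    have hcon : (-η₂) • u₂ = u₁ := by
      rw [neg_smul, eq_comm, ← add_eq_zero_iff_eq_neg]
      exact hmem
    have := (linearIndependent_fin2.mp hu).2 (-η₂)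
    simp only [Matrix.cons_val_one, Matrix.head_cons, Matrix.cons_val_zero] at this
    exact this hcon
  -- uniform lower bounds
  obtain ⟨m₁, hm₁K, hmin₁⟩ := hKcc.exists_isMinOn hKcne
    (Continuous.continuousOn (by fun_prop :
      Continuous fun η : ℝ × ℝ × ℝ =>
        ‖η.2.1 • u₁ + (η.2.1 * η.2.2) • u₂ - v₁ - η.1 • v₂‖))
  obtain ⟨m₂, hm₂K, hmin₂⟩ := hKcc.exists_isMinOn hKcne
    (Continuous.continuousOn (by fun_prop :
      Continuous fun η : ℝ × ℝ × ℝ =>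
        ‖u₁ + η.1 • u₂ - η.2.1 • v₁ - (η.2.1 * η.2.2) • v₂‖))
  set ε₁ := ‖m₁.2.1 • u₁ + (m₁.2.1 * m₁.2.2) • u₂ - v₁ - m₁.1 • v₂‖ with hε₁d
  set ε₂ := ‖u₁ + m₂.1 • u₂ - m₂.2.1 • v₁ - (m₂.2.1 * m₂.2.2) • v₂‖ with hε₂d
  have hε₁ : 0 < ε₁ := hpos1 m₁ hm₁K
  have hε₂ : 0 < ε₂ := hpos2 m₂ hm₂K
  have hb₁ : ∀ η ∈ Kc, ε₁ ≤ ‖η.2.1 • u₁ + (η.2.1 * η.2.2) • u₂ - v₁ - η.1 • v₂‖ :=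
    fun η hη => isMinOn_iff.mp hmin₁ η hη
  have hb₂ : ∀ η ∈ Kc, ε₂ ≤ ‖u₁ + η.1 • u₂ - η.2.1 • v₁ - (η.2.1 * η.2.2) • v₂‖ :=
    fun η hη => isMinOn_iff.mp hmin₂ η hη
  -- bounds on g1, g2 on the cube
  have hg1le : ∀ η ∈ cube, g1 η ≤ 1/ε₁ := by
    intro η hη
    refine div_le_div₀ zero_le_one (le_of_lt hη.2.1.2) hε₁ (hb₁ η (hcubeKc hη))
  have hg2le : ∀ η ∈ cube, g2 η ≤ 1/ε₂ := by
    intro η hη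
    refine div_le_div₀ zero_le_one (le_of_lt hη.2.1.2) hε₂ (hb₂ η (hcubeKc hη))
  have hg1nn : ∀ η ∈ cube, 0 ≤ g1 η := by
    intro η hη
    exact div_nonneg (le_of_lt hη.2.1.1) (norm_nonneg _)
  have hg2nn : ∀ η ∈ cube, 0 ≤ g2 η := by
    intro η hη
    exact div_nonneg (le_of_lt hη.2.1.1) (norm_nonneg _)
  -- the J's
  set J1 := ∫⁻ η in cube, ENNReal.ofReal (g1 η) with hJ1d
  set J2 := ∫⁻ η in cube, ENNReal.ofReal (g2 η) with hJ2d
  have hJ1top : J1 < ⊤ := by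
    calc J1 ≤ ∫⁻ _ in cube, ENNReal.ofReal (1/ε₁) :=
          setLIntegral_mono measurable_const fun η hη =>
            ENNReal.ofReal_le_ofReal (hg1le η hη)
      _ = ENNReal.ofReal (1/ε₁) * volume cube := setLIntegral_const _ _
      _ < ⊤ := by rw [hcubed, vol_cube, mul_one]; exact ENNReal.ofReal_lt_top
  have hJ2top : J2 < ⊤ := by
    calc J2 ≤ ∫⁻ _ in cube, ENNReal.ofReal (1/ε₂) :=
          setLIntegral_mono measurable_const fun η hη =>
            ENNReal.ofReal_le_ofReal (hg2le η hη)
      _ = ENNReal.ofReal (1/ε₂) * volume cube := setLIntegral_const _ _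
      _ < ⊤ := by rw [hcubed, vol_cube, mul_one]; exact ENNReal.ofReal_lt_top
  -- the key lintegral identity
  have key : ∫⁻ P in refTri ×ˢ refTri, ENNReal.ofReal (f P)
      = ENNReal.ofReal (1/3) * (J1 + J2) := by
    have hSAm : MeasurableSet {q : (ℝ × ℝ) × (ℝ × ℝ) |
        (0 < q.1.2 ∧ q.1.2 < q.1.1 ∧ q.1.1 < 1) ∧
          (0 < q.2.2 ∧ q.2.2 < q.2.1 ∧ q.2.1 < q.1.1)} := by
      exact ((measurableSet_lt measurable_const measurable_fst.snd).inter
        ((measurableSet_lt measurable_fst.snd measurable_fst.fst).inter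
          (measurableSet_lt measurable_fst.fst measurable_const))).inter
        ((measurableSet_lt measurable_const measurable_snd.snd).inter
          ((measurableSet_lt measurable_snd.snd measurable_snd.fst).inter
            (measurableSet_lt measurable_snd.fst measurable_fst.fst)))
    have hSBm : MeasurableSet {q : (ℝ × ℝ) × (ℝ × ℝ) |
        (0 < q.1.2 ∧ q.1.2 < q.1.1 ∧ q.1.1 < q.2.1) ∧
          (0 < q.2.2 ∧ q.2.2 < q.2.1 ∧ q.2.1 < 1)} := by
      exact ((measurableSet_lt measurable_const measurable_fst.snd).inter
        ((measurableSet_lt measurable_fst.snd measurable_fst.fst).inter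
          (measurableSet_lt measurable_fst.fst measurable_snd.fst))).inter
        ((measurableSet_lt measurable_const measurable_snd.snd).inter
          ((measurableSet_lt measurable_snd.snd measurable_snd.fst).inter
            (measurableSet_lt measurable_snd.fst measurable_const)))
    have hunion_sub : ({q : (ℝ × ℝ) × (ℝ × ℝ) |
        (0 < q.1.2 ∧ q.1.2 < q.1.1 ∧ q.1.1 < 1) ∧
          (0 < q.2.2 ∧ q.2.2 < q.2.1 ∧ q.2.1 < q.1.1)} ∪
        {q : (ℝ × ℝ) × (ℝ × ℝ) |
        (0 < q.1.2 ∧ q.1.2 < q.1.1 ∧ q.1.1 < q.2.1) ∧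
          (0 < q.2.2 ∧ q.2.2 < q.2.1 ∧ q.2.1 < 1)}) ⊆ refTri ×ˢ refTri := by
      rintro q (⟨⟨h1, h2, h3⟩, ⟨h4, h5, h6⟩⟩ | ⟨⟨h1, h2, h3⟩, ⟨h4, h5, h6⟩⟩) <;>
        exact ⟨⟨h1, h2, by linarith⟩, ⟨h4, h5, by linarith⟩⟩
    have hdiff : (refTri ×ˢ refTri : Set ((ℝ × ℝ) × (ℝ × ℝ))) \
        ({q : (ℝ × ℝ) × (ℝ × ℝ) |
        (0 < q.1.2 ∧ q.1.2 < q.1.1 ∧ q.1.1 < 1) ∧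
          (0 < q.2.2 ∧ q.2.2 < q.2.1 ∧ q.2.1 < q.1.1)} ∪
        {q : (ℝ × ℝ) × (ℝ × ℝ) |
        (0 < q.1.2 ∧ q.1.2 < q.1.1 ∧ q.1.1 < q.2.1) ∧
          (0 < q.2.2 ∧ q.2.2 < q.2.1 ∧ q.2.1 < 1)})
        ⊆ {q : (ℝ × ℝ) × (ℝ × ℝ) | q.1.1 = q.2.1} := by
      rintro q ⟨⟨⟨a1, a2, a3⟩, ⟨b1, b2, b3⟩⟩, hnot⟩
      by_contra hne
      rcases lt_or_gt_of_ne hne with hlt | hgt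
      · exact hnot (Or.inr ⟨⟨a1, a2, hlt⟩, ⟨b1, b2, b3⟩⟩)
      · exact hnot (Or.inl ⟨⟨a1, a2, a3⟩, ⟨b1, b2, hgt⟩⟩)
    have hae : (refTri ×ˢ refTri : Set ((ℝ × ℝ) × (ℝ × ℝ))) =ᵐ[volume]
        ({q : (ℝ × ℝ) × (ℝ × ℝ) |
        (0 < q.1.2 ∧ q.1.2 < q.1.1 ∧ q.1.1 < 1) ∧
          (0 < q.2.2 ∧ q.2.2 < q.2.1 ∧ q.2.1 < q.1.1)} ∪
        {q : (ℝ × ℝ) × (ℝ × ℝ) |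
        (0 < q.1.2 ∧ q.1.2 < q.1.1 ∧ q.1.1 < q.2.1) ∧
          (0 < q.2.2 ∧ q.2.2 < q.2.1 ∧ q.2.1 < 1)} : Set ((ℝ × ℝ) × (ℝ × ℝ))) := by
      rw [ae_eq_set]
      constructor
      · exact measure_mono_null hdiff vol_diag
      · have he : (({q : (ℝ × ℝ) × (ℝ × ℝ) |
            (0 < q.1.2 ∧ q.1.2 < q.1.1 ∧ q.1.1 < 1) ∧
              (0 < q.2.2 ∧ q.2.2 < q.2.1 ∧ q.2.1 < q.1.1)} ∪
            {q : (ℝ × ℝ) × (ℝ × ℝ) |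
            (0 < q.1.2 ∧ q.1.2 < q.1.1 ∧ q.1.1 < q.2.1) ∧
              (0 < q.2.2 ∧ q.2.2 < q.2.1 ∧ q.2.1 < 1)} : Set ((ℝ × ℝ) × (ℝ × ℝ)))
            \ (refTri ×ˢ refTri)) = ∅ := diff_eq_empty.mpr hunion_sub
        rw [he]
        exact measure_empty
    have hdisj : Disjoint
        {q : (ℝ × ℝ) × (ℝ × ℝ) |
        (0 < q.1.2 ∧ q.1.2 < q.1.1 ∧ q.1.1 < 1) ∧
          (0 < q.2.2 ∧ q.2.2 < q.2.1 ∧ q.2.1 < q.1.1)}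
        {q : (ℝ × ℝ) × (ℝ × ℝ) |
        (0 < q.1.2 ∧ q.1.2 < q.1.1 ∧ q.1.1 < q.2.1) ∧
          (0 < q.2.2 ∧ q.2.2 < q.2.1 ∧ q.2.1 < 1)} := by
      rw [Set.disjoint_left]
      rintro q ⟨⟨_, _, _⟩, ⟨_, _, h6⟩⟩ ⟨⟨_, _, h3'⟩, _⟩
      exact absurd h3' (lt_asymm h6)
    rw [setLIntegral_congr hae, lintegral_union hSBm hdisj]
    have hA1 : ∫⁻ q in {q : (ℝ × ℝ) × (ℝ × ℝ) |
        (0 < q.1.2 ∧ q.1.2 < q.1.1 ∧ q.1.1 < 1) ∧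
          (0 < q.2.2 ∧ q.2.2 < q.2.1 ∧ q.2.1 < q.1.1)},
        ENNReal.ofReal (f q) = ENNReal.ofReal (1/3) * J1 := by
      have hptw : ∀ q : (ℝ × ℝ) × (ℝ × ℝ), ENNReal.ofReal (f q)
          = ENNReal.ofReal (1/‖q.1.1 • v₁ + q.1.2 • v₂ - q.2.1 • u₁ - q.2.2 • u₂‖) := by
        intro q
        have hq : f q = 1/‖q.1.1 • v₁ + q.1.2 • v₂ - q.2.1 • u₁ - q.2.2 • u₂‖ := by
          show (1/‖q.2.1 • u₁ + q.2.2 • u₂ - q.1.1 • v₁ - q.1.2 • v₂‖) = _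
          rw [norm_four]
        rw [hq]
      simp_rw [hptw]
      rw [helperA v₁ v₂ u₁ u₂]
      congr 1
      rw [hJ1d]
      refine lintegral_congr fun η => ?_
      rw [norm_four v₁ (η.1 • v₂) (η.2.1 • u₁) ((η.2.1 * η.2.2) • u₂)]
    have hswap : MeasurePreserving (Prod.swap : ((ℝ × ℝ) × (ℝ × ℝ)) → _)
        volume volume := by
      rw [Measure.volume_eq_prod]
      exact Measure.measurePreserving_swap
    have hA2 : ∫⁻ q in {q : (ℝ × ℝ) × (ℝ × ℝ) |
        (0 < q.1.2 ∧ q.1.2 < q.1.1 ∧ q.1.1 < q.2.1) ∧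
          (0 < q.2.2 ∧ q.2.2 < q.2.1 ∧ q.2.1 < 1)},
        ENNReal.ofReal (f q) = ENNReal.ofReal (1/3) * J2 := by
      have hcomp := hswap.setLIntegral_comp_preimage_emb
        (MeasurableEquiv.prodComm.measurableEmbedding)
        (fun q => ENNReal.ofReal (f q))
        {q : (ℝ × ℝ) × (ℝ × ℝ) |
          (0 < q.1.2 ∧ q.1.2 < q.1.1 ∧ q.1.1 < q.2.1) ∧
            (0 < q.2.2 ∧ q.2.2 < q.2.1 ∧ q.2.1 < 1)}
      rw [← hcomp]
      have hpre : (Prod.swap ⁻¹' {q : (ℝ × ℝ) × (ℝ × ℝ) |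
          (0 < q.1.2 ∧ q.1.2 < q.1.1 ∧ q.1.1 < q.2.1) ∧
            (0 < q.2.2 ∧ q.2.2 < q.2.1 ∧ q.2.1 < 1)})
          = {q : (ℝ × ℝ) × (ℝ × ℝ) |
          (0 < q.1.2 ∧ q.1.2 < q.1.1 ∧ q.1.1 < 1) ∧
            (0 < q.2.2 ∧ q.2.2 < q.2.1 ∧ q.2.1 < q.1.1)} := by
        ext p
        simp only [mem_preimage, mem_setOf_eq, Prod.fst_swap, Prod.snd_swap]
        tauto
      rw [hpre]
      have hfun : (fun a : (ℝ × ℝ) × (ℝ × ℝ) => ENNReal.ofReal (f (Prod.swap a)))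
          = fun p : (ℝ × ℝ) × (ℝ × ℝ) =>
            ENNReal.ofReal (1/‖p.1.1 • u₁ + p.1.2 • u₂ - p.2.1 • v₁ - p.2.2 • v₂‖) := rfl
      rw [hfun, helperA u₁ u₂ v₁ v₂]
    rw [hA1, hA2, mul_add]
  -- conclusions
  have hfnn : ∀ P, 0 ≤ f P := fun P => one_div_nonneg.mpr (norm_nonneg _)
  have hint1 : IntegrableOn f (refTri ×ˢ refTri) volume := by
    constructor
    · exact hfm.aestronglyMeasurable
    · rw [hasFiniteIntegral_iff_ofReal (Filter.Eventually.of_forall hfnn)]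
      rw [key]
      exact ENNReal.mul_lt_top ENNReal.ofReal_lt_top (ENNReal.add_lt_top.mpr ⟨hJ1top, hJ2top⟩)
  have hint2 : IntegrableOn (fun η => g1 η + g2 η) cube volume := by
    apply Measure.integrableOn_of_bounded (M := 1/ε₁ + 1/ε₂)
    · rw [hcubed, vol_cube]; exact one_ne_top
    · exact (hg1m.add hg2m).aestronglyMeasurable
    · filter_upwards [ae_restrict_mem hcubem] with η hη
      rw [Real.norm_eq_abs, abs_of_nonneg (add_nonneg (hg1nn η hη) (hg2nn η hη))]
      exact add_le_add (hg1le η hη) (hg2le η hη)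
  refine ⟨hint1, hint2, ?_⟩
  rw [integral_eq_lintegral_of_nonneg_ae (Filter.Eventually.of_forall hfnn)
    hfm.aestronglyMeasurable]
  rw [integral_eq_lintegral_of_nonneg_ae (f := fun η => g1 η + g2 η)
    (by filter_upwards [ae_restrict_mem hcubem] with η hη
        exact add_nonneg (hg1nn η hη) (hg2nn η hη))
    (hg1m.add hg2m).aestronglyMeasurable]
  have hsum : ∫⁻ η in cube, ENNReal.ofReal (g1 η + g2 η) = J1 + J2 := by
    have : ∫⁻ η in cube, ENNReal.ofReal (g1 η + g2 η)
        = ∫⁻ η in cube, (ENNReal.ofReal (g1 η) + ENNReal.ofReal (g2 η)) := by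
      apply lintegral_congr_ae
      filter_upwards [ae_restrict_mem hcubem] with η hη
      rw [ENNReal.ofReal_add (hg1nn η hη) (hg2nn η hη)]
    have hm1 : Measurable fun η : ℝ × ℝ × ℝ => ENNReal.ofReal (g1 η) :=
      ENNReal.measurable_ofReal.comp hg1m
    rw [this, lintegral_add_left hm1]
  rw [key, hsum, ENNReal.toReal_mul, ENNReal.toReal_ofReal (by norm_num)]
end
end
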